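/- arXiv:1012.5512 — 10 statements merged into one kernel-verified Lean document; each statement's English description precedes it below -/
import Mathlib

section
/- Let K be a compact Hausdorff space whose weight (the least cardinality of a base for its topology) is less than the cardinal 𝔟. If there exists a lower semicontinuous quasi metric on K which fragments K, then there exists a lower semicontinuous metric on K which fragments K. (Every quasi Radon-Nikodým compact space of weight less than 𝔟 is Radon-Nikodým compact.) -/
open Set Topology Cardinal

/-- A map `f : X × X → ℝ` fragments the topological space `X` if for every nonempty
subset `L` of `X` and every `ε > 0` there is a nonempty relatively open subset of `L`
of `f`-diameter less than `ε`. -/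
def Fragments {X : Type*} [TopologicalSpace X] (f : X → X → ℝ) : Prop :=
  ∀ L : Set X, L.Nonempty → ∀ ε : ℝ, 0 < ε →
    ∃ V : Set X, IsOpen V ∧ (V ∩ L).Nonempty ∧
      ∀ x ∈ V ∩ L, ∀ y ∈ V ∩ L, f x y < ε

/-- `f` (defined on the ambient space `X`) fragments the subset `K`. -/
def FragmentsOn {X : Type*} [TopologicalSpace X] (f : X → X → ℝ) (K : Set X) : Prop :=
  ∀ L : Set X, L ⊆ K → L.Nonempty → ∀ ε : ℝ, 0 < ε →
    ∃ V : Set X, IsOpen V ∧ (V ∩ L).Nonempty ∧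
      ∀ x ∈ V ∩ L, ∀ y ∈ V ∩ L, f x y < ε

/-- A quasi metric: nonnegative, symmetric, and vanishing exactly on the diagonal. -/
def IsQuasiMetric {X : Type*} (f : X → X → ℝ) : Prop :=
  (∀ x y, 0 ≤ f x y) ∧ (∀ x y, f x y = f y x) ∧ (∀ x y, f x y = 0 ↔ x = y)

/-- A metric (as a two-variable real function): symmetric, vanishing exactly on the
diagonal, and satisfying the triangle inequality. -/
def IsMetricFun {X : Type*} (d : X → X → ℝ) : Prop :=
  (∀ x y, d x y = d y x) ∧ (∀ x y, d x y = 0 ↔ x = y) ∧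
    (∀ x y z, d x z ≤ d x y + d y z)

/-- Lower semicontinuity of a two-variable map for the product topology. -/
def LSC {X : Type*} [TopologicalSpace X] (f : X → X → ℝ) : Prop :=
  LowerSemicontinuous (fun p : X × X => f p.1 p.2)

/-- A subset of `ℕ → ℕ` is σ-bounded (for the pointwise order) if it is a countable
union of order-bounded sets. -/
def SigmaBounded (S : Set (ℕ → ℕ)) : Prop :=
  ∃ B : ℕ → Set (ℕ → ℕ), S ⊆ (⋃ n, B n) ∧ ∀ n, ∃ τ : ℕ → ℕ, ∀ σ ∈ B n, σ ≤ τ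

/-- The cardinal `𝔟`: the least cardinality of a subset of `ℕ → ℕ` which is not
σ-bounded for the pointwise order. -/
noncomputable def cardinalB : Cardinal :=
  sInf { c | ∃ S : Set (ℕ → ℕ), ¬ SigmaBounded S ∧ #S = c }

/-- The weight of a topological space: the least cardinality of a base for its topology. -/
noncomputable def topWeight (X : Type*) [TopologicalSpace X] : Cardinal :=
  sInf { c | ∃ B : Set (Set X), TopologicalSpace.IsTopologicalBasis B ∧ #B = c }

lemma sigmaBounded_of_countable {S : Set (ℕ → ℕ)} (h : S.Countable) : SigmaBounded S := by
  rcases S.eq_empty_or_nonempty with rfl | hne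
  · exact ⟨fun _ => ∅, by simp, fun n => ⟨0, by simp⟩⟩
  · obtain ⟨g, rfl⟩ := h.exists_eq_range hne
    refine ⟨fun n => {g n}, ?_, fun n => ⟨g n, ?_⟩⟩
    · rintro σ ⟨n, rfl⟩
      exact mem_iUnion.mpr ⟨n, rfl⟩
    · rintro σ rfl
      exact le_rfl

lemma not_sigmaBounded_univ : ¬ SigmaBounded (univ : Set (ℕ → ℕ)) := by
  rintro ⟨B, hcov, hbd⟩
  choose τ hτ using hbd
  set σ : ℕ → ℕ := fun n => τ n n + 1 with hσ
  rcases mem_iUnion.mp (hcov (mem_univ σ)) with ⟨n, hn⟩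
  have h1 : σ n ≤ τ n n := hτ n σ hn n
  simp [hσ] at h1

lemma aleph0_le_cardinalB : ℵ₀ ≤ cardinalB := by
  refine le_csInf ⟨#(univ : Set (ℕ → ℕ)), univ, not_sigmaBounded_univ, rfl⟩ ?_
  rintro c ⟨S, hS, rfl⟩
  by_contra h
  push_neg at h
  refine hS (sigmaBounded_of_countable ?_)
  rw [← Set.countable_coe_iff]
  exact (Cardinal.mk_le_aleph0_iff).mp h.le

lemma sigmaBounded_of_mk_lt {S : Set (ℕ → ℕ)} (h : #S < cardinalB) : SigmaBounded S := by
  by_contra hS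
  have hmem : #S ∈ { c | ∃ S : Set (ℕ → ℕ), ¬ SigmaBounded S ∧ #S = c } := ⟨S, hS, rfl⟩
  exact absurd (csInf_le' hmem) (not_le.mpr h)

lemma far_strips (m : ℕ) {a b : ℝ} (ha : a ∈ Icc (0:ℝ) 1) (hb : b ∈ Icc (0:ℝ) 1)
    (h : 2/((m:ℝ)+1) < b - a) :
    ∃ j j' : ℕ, j + 2 ≤ j' ∧ j' ≤ m ∧
      a ∈ Icc ((j:ℝ)/((m:ℝ)+1)) (((j:ℝ)+1)/((m:ℝ)+1)) ∧
      b ∈ Icc ((j':ℝ)/((m:ℝ)+1)) (((j':ℝ)+1)/((m:ℝ)+1)) := by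
  have hM : (0:ℝ) < (m:ℝ)+1 := by positivity
  have h2 : 2 < (b-a)*((m:ℝ)+1) := (div_lt_iff₀ hM).mp h
  set ja := ⌊a*((m:ℝ)+1)⌋₊ with hja
  set jb := ⌊b*((m:ℝ)+1)⌋₊ with hjb
  have haM : 0 ≤ a*((m:ℝ)+1) := mul_nonneg ha.1 hM.le
  have hbM : 0 ≤ b*((m:ℝ)+1) := mul_nonneg hb.1 hM.le
  have h1 : (ja:ℝ) ≤ a*((m:ℝ)+1) := Nat.floor_le haM
  have h1' : a*((m:ℝ)+1) < (ja:ℝ)+1 := Nat.lt_floor_add_one _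
  have h3 : (jb:ℝ) ≤ b*((m:ℝ)+1) := Nat.floor_le hbM
  have hbM1 : b*((m:ℝ)+1) ≤ (m:ℝ)+1 := by nlinarith [hb.2]
  have hja2m : ja + 2 ≤ m := by
    have hr : (ja:ℝ) + 2 < (m:ℝ)+1 := by nlinarith
    have : ((ja + 2 : ℕ) : ℝ) < ((m + 1 : ℕ) : ℝ) := by push_cast; linarith
    have := Nat.cast_lt.mp this
    omega
  have hjbge : ja + 2 ≤ jb := by
    apply Nat.le_floor
    push_cast
    nlinarith
  refine ⟨ja, min jb m, le_min hjbge hja2m, min_le_right _ _, ?_, ?_⟩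
  · constructor
    · rw [div_le_iff₀ hM]; linarith
    · rw [le_div_iff₀ hM]; linarith
  · rcases le_or_gt jb m with hc | hc
    · rw [min_eq_left hc]
      have h3' : b*((m:ℝ)+1) < (jb:ℝ)+1 := Nat.lt_floor_add_one _
      constructor
      · rw [div_le_iff₀ hM]; linarith
      · rw [le_div_iff₀ hM]; linarith
    · rw [min_eq_right hc.le]
      constructor
      · rw [div_le_iff₀ hM]
        have : ((m:ℝ)) < (jb:ℝ) := by exact_mod_cast hc
        linarith
      · rw [le_div_iff₀ hM]; nlinarith [hb.2]

/-- A quasi Radon-Nikodým compact space of weight less than `𝔟` is Radon-Nikodým compact. -/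
theorem statement0 {K : Type u} [TopologicalSpace K] [CompactSpace K] [T2Space K]
    (hw : topWeight K < Cardinal.lift.{u} cardinalB)
    (hqRN : ∃ f : K → K → ℝ, IsQuasiMetric f ∧ LSC f ∧ Fragments f) :
    ∃ d : K → K → ℝ, IsMetricFun d ∧ LSC d ∧ Fragments d := by
  classical
  obtain ⟨f, ⟨hf0, hfsymm, hfeq⟩, hflsc, hffrag⟩ := hqRN
  -- a basis realizing the weight
  have hSw : {c | ∃ B : Set (Set K), TopologicalSpace.IsTopologicalBasis B ∧ #B = c}.Nonempty :=
    ⟨#{U : Set K | IsOpen U}, {U | IsOpen U}, TopologicalSpace.isTopologicalBasis_opens, rfl⟩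
  obtain ⟨B, hBbasis, hBcard⟩ := csInf_mem hSw
  have hBw : #B < Cardinal.lift.{u} cardinalB := by
    rw [show sInf {c | ∃ B : Set (Set K), TopologicalSpace.IsTopologicalBasis B ∧ #B = c}
      = topWeight K from rfl] at hBcard
    exact hBcard ▸ hw
  -- index set: pairs of basic sets with disjoint closures
  let P : Set (Set K × Set K) :=
    {q | (q.1 ∈ B ∧ q.2 ∈ B) ∧ Disjoint (closure q.1) (closure q.2)}
  -- Urysohn functions
  have hgex : ∀ q : P, ∃ g : K → ℝ, Continuous g ∧ (∀ x, g x ∈ Icc (0:ℝ) 1) ∧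
      (∀ x ∈ closure (q : Set K × Set K).1, g x = 0) ∧
      (∀ x ∈ closure (q : Set K × Set K).2, g x = 1) := by
    intro q
    obtain ⟨g, hg0, hg1, hg01⟩ := exists_continuous_zero_one_of_isClosed
      isClosed_closure isClosed_closure q.2.2
    exact ⟨g, g.continuous, hg01, fun x hx => by simpa using hg0 hx,
      fun x hx => by simpa using hg1 hx⟩
  choose g hgc hg01 hgz hgo using hgex
  -- strips
  let C : P → ℕ → ℕ → Set K := fun q m j =>
    g q ⁻¹' Icc ((j:ℝ)/((m:ℝ)+1)) (((j:ℝ)+1)/((m:ℝ)+1))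
  -- separation numbers for far strips
  have hsep : ∀ (q : P) (m j j' : ℕ), ∃ n : ℕ, j + 2 ≤ j' →
      ∀ x ∈ C q m j, ∀ y ∈ C q m j', 1/((n:ℝ)+1) < f x y := by
    intro q m j j'
    by_cases hjj : j + 2 ≤ j'
    · have hM : (0:ℝ) < (m:ℝ)+1 := by positivity
      have hCj : IsClosed (C q m j) := isClosed_Icc.preimage (hgc q)
      have hCj' : IsClosed (C q m j') := isClosed_Icc.preimage (hgc q)
      have hD : IsCompact (C q m j ×ˢ C q m j') := (hCj.prod hCj').isCompact
      set U : ℕ → Set (K × K) := fun n => (fun p : K × K => f p.1 p.2) ⁻¹' Ioi (1/((n:ℝ)+1))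
        with hU
      have hUopen : ∀ n, IsOpen (U n) := fun n => hflsc.isOpen_preimage _
      have hUmono : Monotone U := by
        intro n n' hnn' p hp
        have : 1/((n':ℝ)+1) ≤ 1/((n:ℝ)+1) :=
          one_div_le_one_div_of_le (by positivity) (by exact_mod_cast Nat.succ_le_succ hnn')
        exact lt_of_le_of_lt this hp
      have hcover : (C q m j ×ˢ C q m j') ⊆ ⋃ n, U n := by
        rintro ⟨x, y⟩ ⟨hx, hy⟩
        have hgxy : g q x < g q y := by
          have hx2 : g q x ≤ ((j:ℝ)+1)/((m:ℝ)+1) := hx.2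
          have hy1 : ((j':ℝ))/((m:ℝ)+1) ≤ g q y := hy.1
          have hj : ((j:ℝ)+1) < (j':ℝ) := by exact_mod_cast (by omega : j + 1 < j')
          calc g q x ≤ ((j:ℝ)+1)/((m:ℝ)+1) := hx2
            _ < ((j':ℝ))/((m:ℝ)+1) := by gcongr
            _ ≤ g q y := hy1
        have hne : x ≠ y := by
          intro h; rw [h] at hgxy; exact lt_irrefl _ hgxy
        have hpos : 0 < f x y :=
          lt_of_le_of_ne (hf0 x y) (fun h => hne ((hfeq x y).mp h.symm))
        obtain ⟨n, hn⟩ := exists_nat_one_div_lt hpos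
        exact mem_iUnion.mpr ⟨n, hn⟩
      obtain ⟨n, hn⟩ := hD.elim_directed_cover U hUopen hcover hUmono.directed_le
      exact ⟨n, fun _ x hx y hy => hn (mk_mem_prod hx hy)⟩
    · exact ⟨0, fun h => absurd h hjj⟩
  choose en hen using hsep
  -- the functions ν q ∈ ℕ^ℕ
  let ν : P → ℕ → ℕ := fun q m =>
    (Finset.range (m+1) ×ˢ Finset.range (m+1)).sup (fun p => en q m p.1 p.2)
  have hν : ∀ (q : P) (m j j' : ℕ), j + 2 ≤ j' → j' ≤ m →
      ∀ x ∈ C q m j, ∀ y ∈ C q m j', 1/((ν q m : ℝ)+1) < f x y := by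
    intro q m j j' hjj hj'm x hx y hy
    have hmem : (j, j') ∈ Finset.range (m+1) ×ˢ Finset.range (m+1) := by
      simp only [Finset.mem_product, Finset.mem_range]
      omega
    have hle : en q m j j' ≤ ν q m := Finset.le_sup (f := fun p : ℕ × ℕ => en q m p.1 p.2) hmem
    have h1 := hen q m j j' hjj x hx y hy
    have h2 : 1/((ν q m : ℝ)+1) ≤ 1/((en q m j j' : ℝ)+1) :=
      one_div_le_one_div_of_le (by positivity) (by exact_mod_cast Nat.succ_le_succ hle)
    linarith
  -- σ-boundedness via 𝔟
  have hcard : #(Set.range fun q : P => ν q) < cardinalB := by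
    have h1 : Cardinal.lift.{u} #(Set.range fun q : P => ν q) ≤ Cardinal.lift.{0} #P :=
      Cardinal.mk_range_le_lift
    rw [Cardinal.lift_uzero] at h1
    have hinj : Function.Injective
        (fun q : P => ((⟨(q : Set K × Set K).1, q.2.1.1⟩ : B), (⟨(q : Set K × Set K).2, q.2.1.2⟩ : B))) := by
      intro q q' h
      apply Subtype.ext
      have h1 := congrArg (fun p : (B × B) => (p.1 : Set K)) h
      have h2 := congrArg (fun p : (B × B) => (p.2 : Set K)) h
      exact Prod.ext h1 h2
    have h2 : #P ≤ #B * #B := by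
      have := Cardinal.mk_le_of_injective hinj
      simpa [Cardinal.mk_prod, Cardinal.lift_id] using this
    have hℵ : ℵ₀ ≤ Cardinal.lift.{u} cardinalB := by
      rw [← Cardinal.lift_aleph0.{u,0}]
      exact Cardinal.lift_le.mpr aleph0_le_cardinalB
    have h3 : #P < Cardinal.lift.{u} cardinalB :=
      lt_of_le_of_lt h2 (Cardinal.mul_lt_of_lt hℵ hBw hBw)
    exact Cardinal.lift_lt.mp (lt_of_le_of_lt h1 h3)
  obtain ⟨Bk, hcov, hbd⟩ := sigmaBounded_of_mk_lt hcard
  choose τ hτ using hbd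
  have hkkex : ∀ q : P, ∃ k, ν q ≤ τ k := by
    intro q
    rcases mem_iUnion.mp (hcov ⟨q, rfl⟩) with ⟨k, hk⟩
    exact ⟨k, hτ k _ hk⟩
  choose kk hkkb using hkkex
  -- the metric
  let w : P → ℝ := fun q => (1/2 : ℝ)^(kk q)
  let term : P → K → K → ℝ := fun q x y => w q * |g q x - g q y|
  let d : K → K → ℝ := fun x y => sSup (Set.range fun q => term q x y)
  have hw01 : ∀ q : P, 0 < w q ∧ w q ≤ 1 := by
    intro q
    constructor
    · positivity
    · exact pow_le_one₀ (by norm_num) (by norm_num)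
  have habs1 : ∀ (q : P) (x y : K), |g q x - g q y| ≤ 1 := by
    intro q x y
    have h1 := hg01 q x
    have h2 := hg01 q y
    rw [abs_le]
    constructor <;> [linarith [h1.1, h2.2]; linarith [h1.2, h2.1]]
  have hterm0 : ∀ (q : P) (x y : K), 0 ≤ term q x y :=
    fun q x y => mul_nonneg (hw01 q).1.le (abs_nonneg _)
  have hterm1 : ∀ (q : P) (x y : K), term q x y ≤ 1 :=
    fun q x y => mul_le_one₀ (hw01 q).2 (abs_nonneg _) (habs1 q x y)
  have hbdd : ∀ x y : K, BddAbove (Set.range fun q => term q x y) := by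
    intro x y
    refine ⟨1, ?_⟩
    rintro t ⟨q, rfl⟩
    exact hterm1 q x y
  have hdnonneg : ∀ x y : K, 0 ≤ d x y := by
    intro x y
    apply Real.sSup_nonneg
    rintro t ⟨q, rfl⟩
    exact hterm0 q x y
  -- separation
  have hsepB : ∀ x y : K, x ≠ y → ∃ q : P, x ∈ (q : Set K × Set K).1 ∧ y ∈ (q : Set K × Set K).2 := by
    intro x y hxy
    obtain ⟨O₁, O₂, hO₁, hO₂, hxO, hyO, hdis⟩ := t2_separation hxy
    obtain ⟨U', hU'o, hxU', hU'c⟩ := normal_exists_closure_subset isClosed_singleton hO₁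
      (singleton_subset_iff.mpr hxO)
    obtain ⟨V', hV'o, hyV', hV'c⟩ := normal_exists_closure_subset isClosed_singleton hO₂
      (singleton_subset_iff.mpr hyO)
    obtain ⟨W, hWB, hxW, hWU'⟩ := hBbasis.exists_subset_of_mem_open (hxU' rfl) hU'o
    obtain ⟨V, hVB, hyV, hVV'⟩ := hBbasis.exists_subset_of_mem_open (hyV' rfl) hV'o
    have hdisj : Disjoint (closure W) (closure V) := by
      apply Disjoint.mono ((closure_mono hWU').trans hU'c) ((closure_mono hVV').trans hV'c) hdis
    exact ⟨⟨(W, V), ⟨hWB, hVB⟩, hdisj⟩, hxW, hyV⟩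
  refine ⟨d, ⟨?_, ?_, ?_⟩, ?_, ?_⟩
  · -- symmetry
    intro x y
    have : (fun q : P => term q x y) = (fun q : P => term q y x) := by
      funext q
      simp only [term]
      rw [abs_sub_comm]
    simp only [d, this]
  · -- zero iff eq
    intro x y
    constructor
    · intro h
      by_contra hxy
      obtain ⟨q, hxq, hyq⟩ := hsepB x y hxy
      have hgx : g q x = 0 := hgz q x (subset_closure hxq)
      have hgy : g q y = 1 := hgo q y (subset_closure hyq)
      have ht : term q x y = w q := by
        simp [term, hgx, hgy]
      have hle : term q x y ≤ d x y := le_csSup (hbdd x y) ⟨q, rfl⟩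
      rw [h, ht] at hle
      exact absurd hle (not_le.mpr (hw01 q).1)
    · rintro rfl
      refine le_antisymm ?_ (hdnonneg x x)
      apply Real.sSup_le ?_ le_rfl
      rintro t ⟨q, rfl⟩
      simp [term]
  · -- triangle
    intro x y z
    apply Real.sSup_le ?_ (add_nonneg (hdnonneg x y) (hdnonneg y z))
    rintro t ⟨q, rfl⟩
    have h1 : term q x z ≤ term q x y + term q y z := by
      have := abs_sub_le (g q x) (g q y) (g q z)
      have h' := mul_le_mul_of_nonneg_left this (hw01 q).1.le
      simpa [term, mul_add] using h'
    exact h1.trans (add_le_add (le_csSup (hbdd x y) ⟨q, rfl⟩) (le_csSup (hbdd y z) ⟨q, rfl⟩))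
  · -- LSC
    intro p c hc
    rcases lt_or_ge c 0 with hc0 | hc0
    · exact Filter.Eventually.of_forall fun p' => lt_of_lt_of_le hc0 (hdnonneg _ _)
    · have hc' : c < sSup (Set.range fun q : P => term q p.1 p.2) := hc
      have hne : (Set.range fun q : P => term q p.1 p.2).Nonempty := by
        rcases isEmpty_or_nonempty P with hP | hP
        · rw [Set.range_eq_empty, Real.sSup_empty] at hc'
          linarith
        · exact Set.range_nonempty _
      obtain ⟨t, ⟨q, rfl⟩, hct⟩ := exists_lt_of_lt_csSup hne hc'
      have hcont : Continuous (fun p' : K × K => term q p'.1 p'.2) := by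
        apply Continuous.mul continuous_const
        exact (((hgc q).comp continuous_fst).sub ((hgc q).comp continuous_snd)).abs
      have hopen : IsOpen {p' : K × K | c < term q p'.1 p'.2} :=
        isOpen_lt continuous_const hcont
      have hev : ∀ᶠ p' in 𝓝 p, c < term q p'.1 p'.2 := hopen.mem_nhds hct
      exact hev.mono fun p' hp' => lt_of_lt_of_le hp' (le_csSup (hbdd _ _) ⟨q, rfl⟩)
  · -- Fragments
    intro L hL ε hε
    obtain ⟨N, hN⟩ := exists_pow_lt_of_lt_one hε (by norm_num : (1/2 : ℝ) < 1)
    obtain ⟨m, hm⟩ := exists_nat_gt (2/ε)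
    have hm' : 2/((m:ℝ)+1) < ε := by
      rw [div_lt_iff₀ (by positivity)]
      have h1 : 2 < ε * m := by
        have := (div_lt_iff₀ hε).mp hm
        linarith
      nlinarith
    set T : ℕ := (Finset.range N).sup (fun k => τ k m) with hT
    have hTpos : (0:ℝ) < 1/((T:ℝ)+1) := by positivity
    obtain ⟨V, hVo, hVne, hVsmall⟩ := hffrag L hL _ hTpos
    refine ⟨V, hVo, hVne, ?_⟩
    intro x hx y hy
    have key : ∀ q : P, term q x y ≤ max ((1/2 : ℝ)^N) (2/((m:ℝ)+1)) := by
      intro q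
      rcases lt_or_ge (kk q) N with hk | hk
      · have hosc : |g q x - g q y| ≤ 2/((m:ℝ)+1) := by
          by_contra hcon
          push_neg at hcon
          have main : ∀ u v : K, u ∈ V ∩ L → v ∈ V ∩ L →
              2/((m:ℝ)+1) < g q v - g q u → False := by
            intro u v hu hv hlt
            obtain ⟨j, j', hjj, hj'm, hus, hvs⟩ := far_strips m (hg01 q u) (hg01 q v) hlt
            have hf : 1/((ν q m : ℝ)+1) < f u v := hν q m j j' hjj hj'm u hus v hvs
            have hTb : ν q m ≤ T := le_trans (hkkb q m)
              (Finset.le_sup (f := fun k => τ k m) (Finset.mem_range.mpr hk))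
            have h2 : 1/((T:ℝ)+1) ≤ 1/((ν q m : ℝ)+1) :=
              one_div_le_one_div_of_le (by positivity) (by exact_mod_cast Nat.succ_le_succ hTb)
            have h3 := hVsmall u hu v hv
            linarith
          rcases le_total (g q x) (g q y) with h' | h'
          · rw [abs_sub_comm, abs_of_nonneg (by linarith)] at hcon
            exact main x y hx hy hcon
          · rw [abs_of_nonneg (by linarith)] at hcon
            exact main y x hy hx hcon
        calc term q x y ≤ |g q x - g q y| :=
              mul_le_of_le_one_left (abs_nonneg _) (hw01 q).2
          _ ≤ 2/((m:ℝ)+1) := hosc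
          _ ≤ max ((1/2 : ℝ)^N) (2/((m:ℝ)+1)) := le_max_right _ _
      · calc term q x y ≤ w q := mul_le_of_le_one_right (hw01 q).1.le (habs1 q x y)
          _ ≤ (1/2 : ℝ)^N := pow_le_pow_of_le_one (by norm_num) (by norm_num) hk
          _ ≤ max ((1/2 : ℝ)^N) (2/((m:ℝ)+1)) := le_max_left _ _
    have hd : d x y ≤ max ((1/2 : ℝ)^N) (2/((m:ℝ)+1)) := by
      apply Real.sSup_le ?_ (le_trans (by positivity) (le_max_left ((1/2 : ℝ)^N) _))
      rintro t ⟨q, rfl⟩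
      exact key q
    exact lt_of_le_of_lt hd (max_lt hN hm')
end

section
/- Every quasi Radon-Nikodým compact space K embeds homeomorphically into a product ∏_{i∈I} K_i where the index set I has cardinality at most 𝔡 and each K_i is a compact Hausdorff space carrying a lower semicontinuous metric which fragments K_i (i.e., each factor is Radon-Nikodým compact). -/
open Set Topology Cardinal

/-- The cardinal `𝔡`: the least cardinality of a cofinal subset of `(ℕ → ℕ, ≤)`
with the pointwise order. -/
noncomputable def cardinalD : Cardinal :=
  sInf { c | ∃ S : Set (ℕ → ℕ), (∀ σ : ℕ → ℕ, ∃ τ ∈ S, σ ≤ τ) ∧ #S = c }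

/-!
### Auxiliary material for the proof
-/

section Transfer

variable {X : Type*} {Y : Type*} [TopologicalSpace X] [CompactSpace X]
  [TopologicalSpace Y] [T2Space Y]

/-- Namioka's transfer lemma: if the pullback of `D` along a continuous surjection from a
compact space fragments the domain, then `D` fragments the codomain. -/
theorem fragments_of_pullback {π : X → Y} (hc : Continuous π) (hs : Function.Surjective π)
    {D : Y → Y → ℝ} (h : Fragments (fun a b => D (π a) (π b))) : Fragments D := by
  have closedCase : ∀ L : Set Y, IsClosed L → L.Nonempty → ∀ ε : ℝ, 0 < ε →
      ∃ V : Set Y, IsOpen V ∧ (V ∩ L).Nonempty ∧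
        ∀ x ∈ V ∩ L, ∀ y ∈ V ∩ L, D x y < ε := by
    intro L hLc hLne ε hε
    set 𝒮 : Set (Set X) := {M | M ⊆ π ⁻¹' L ∧ IsClosed M ∧ L ⊆ π '' M} with h𝒮
    have hpre : π ⁻¹' L ∈ 𝒮 := by
      refine ⟨subset_rfl, hLc.preimage hc, fun y hy => ?_⟩
      obtain ⟨x, hx⟩ := hs y
      exact ⟨x, by simp [mem_preimage, hx, hy], hx⟩
    have hZorn : ∀ c ⊆ 𝒮, IsChain (· ⊆ ·) c → c.Nonempty → ∃ lb ∈ 𝒮, ∀ s ∈ c, lb ⊆ s := by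
      intro c hc𝒮 hchain hcne
      refine ⟨⋂₀ c, ⟨?_, ?_, ?_⟩, fun s hsc => sInter_subset_of_mem hsc⟩
      · obtain ⟨M₀, hM₀⟩ := hcne
        exact (sInter_subset_of_mem hM₀).trans (hc𝒮 hM₀).1
      · exact isClosed_sInter fun M hM => (hc𝒮 hM).2.1
      · intro y hy
        have : Nonempty c := hcne.to_subtype
        have key : (⋂ M : c, ((M : Set X) ∩ π ⁻¹' {y})).Nonempty := by
          apply IsCompact.nonempty_iInter_of_directed_nonempty_isCompact_isClosed
          · rintro ⟨M, hM⟩ ⟨N, hN⟩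
            rcases hchain.total hM hN with hMN | hNM
            · exact ⟨⟨M, hM⟩, fun z hz => hz, fun z hz => ⟨hMN hz.1, hz.2⟩⟩
            · exact ⟨⟨N, hN⟩, fun z hz => ⟨hNM hz.1, hz.2⟩, fun z hz => hz⟩
          · rintro ⟨M, hM⟩
            obtain ⟨x, hxM, hπx⟩ := (hc𝒮 hM).2.2 hy
            exact ⟨x, hxM, by simp [hπx]⟩
          · rintro ⟨M, hM⟩
            exact ((hc𝒮 hM).2.1.inter (isClosed_singleton.preimage hc)).isCompact
          · rintro ⟨M, hM⟩
            exact (hc𝒮 hM).2.1.inter (isClosed_singleton.preimage hc)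
        obtain ⟨x, hx⟩ := key
        simp only [mem_iInter, mem_inter_iff, mem_preimage, mem_singleton_iff] at hx
        refine ⟨x, ?_, ?_⟩
        · intro M hM
          exact (hx ⟨M, hM⟩).1
        · obtain ⟨M₀, hM₀⟩ := hcne
          exact (hx ⟨M₀, hM₀⟩).2
    obtain ⟨M, -, hMmin⟩ := zorn_superset_nonempty 𝒮 hZorn (π ⁻¹' L) hpre
    · have hM𝒮 : M ∈ 𝒮 := hMmin.prop
      obtain ⟨y₀, hy₀⟩ := hLne
      obtain ⟨x₀, hx₀M, -⟩ := hM𝒮.2.2 hy₀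
      obtain ⟨V, hVo, hVne, hVd⟩ := h M ⟨x₀, hx₀M⟩ ε hε
      refine ⟨(π '' (M ∩ Vᶜ))ᶜ, ?_, ?_, ?_⟩
      · exact (((hM𝒮.2.1.inter hVo.isClosed_compl).isCompact.image hc).isClosed).isOpen_compl
      · by_contra hemp
        rw [not_nonempty_iff_eq_empty] at hemp
        have hLsub : L ⊆ π '' (M ∩ Vᶜ) := by
          intro y hy
          by_contra hny
          exact absurd (hemp ▸ (⟨hny, hy⟩ : y ∈ (π '' (M ∩ Vᶜ))ᶜ ∩ L)) (notMem_empty y)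
        have hmem : M ∩ Vᶜ ∈ 𝒮 :=
          ⟨inter_subset_left.trans hM𝒮.1, hM𝒮.2.1.inter hVo.isClosed_compl, hLsub⟩
        have hsub : M ⊆ M ∩ Vᶜ := hMmin.2 hmem inter_subset_left
        obtain ⟨z, hzV, hzM⟩ := hVne
        exact (hsub hzM).2 hzV
      · intro y₁ hy₁ y₂ hy₂
        obtain ⟨m₁, hm₁M, hπ₁⟩ := hM𝒮.2.2 hy₁.2
        obtain ⟨m₂, hm₂M, hπ₂⟩ := hM𝒮.2.2 hy₂.2
        have hm₁V : m₁ ∈ V := by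
          by_contra hnv
          exact hy₁.1 ⟨m₁, ⟨hm₁M, hnv⟩, hπ₁⟩
        have hm₂V : m₂ ∈ V := by
          by_contra hnv
          exact hy₂.1 ⟨m₂, ⟨hm₂M, hnv⟩, hπ₂⟩
        rw [← hπ₁, ← hπ₂]
        exact hVd m₁ ⟨hm₁V, hm₁M⟩ m₂ ⟨hm₂V, hm₂M⟩
  -- general case via closures
  intro L hLne ε hε
  obtain ⟨V, hVo, hVne, hVd⟩ := closedCase (closure L) isClosed_closure
    (hLne.mono subset_closure) ε hε
  obtain ⟨p, hpV, hpcl⟩ := hVne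
  refine ⟨V, hVo, mem_closure_iff.mp hpcl V hVo hpV, fun x hx y hy => ?_⟩
  exact hVd x ⟨hx.1, subset_closure hx.2⟩ y ⟨hy.1, subset_closure hy.2⟩

end Transfer

section Construction

variable {K : Type u} [TopologicalSpace K]

/-- Continuous `[0,1]`-valued functions which are uniformly controlled by `f` with modulus
determined by `τ`. -/
def goodSet (f : K → K → ℝ) (τ : ℕ → ℕ) : Set (K → ℝ) :=
  {φ | Continuous φ ∧ (∀ x, φ x ∈ Icc (0 : ℝ) 1) ∧
    ∀ (n : ℕ) (u v : K), f u v ≤ 1 / ((τ n : ℝ) + 1) → |φ u - φ v| ≤ 1 / ((n : ℝ) + 1)}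

/-- Evaluation map into the product indexed by the good functions. -/
def embMap (f : K → K → ℝ) (τ : ℕ → ℕ) : K → (goodSet f τ → ℝ) := fun x φ => φ.1 x

theorem continuous_embMap (f : K → K → ℝ) (τ : ℕ → ℕ) : Continuous (embMap f τ) :=
  continuous_pi fun φ => φ.2.1

/-- The sup metric on the factor. -/
noncomputable def factorD (f : K → K → ℝ) (τ : ℕ → ℕ)
    (p q : ↥(range (embMap f τ))) : ℝ :=
  ⨆ φ : goodSet f τ, |p.1 φ - q.1 φ|

theorem coord_mem_Icc {f : K → K → ℝ} {τ : ℕ → ℕ} (p : ↥(range (embMap f τ)))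
    (φ : goodSet f τ) : p.1 φ ∈ Icc (0 : ℝ) 1 := by
  obtain ⟨x, hx⟩ := p.2
  have : p.1 φ = φ.1 x := by rw [← hx]; rfl
  rw [this]
  exact φ.2.2.1 x

theorem factorD_bdd (f : K → K → ℝ) (τ : ℕ → ℕ) (p q : ↥(range (embMap f τ))) :
    BddAbove (range fun φ : goodSet f τ => |p.1 φ - q.1 φ|) := by
  refine ⟨1, ?_⟩
  rintro r ⟨φ, rfl⟩
  have h1 := coord_mem_Icc p φ
  have h2 := coord_mem_Icc q φ
  rw [abs_sub_le_iff]
  constructor <;> [skip; skip] <;>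
    · have := h1.1; have := h1.2; have := h2.1; have := h2.2; linarith

theorem le_factorD (f : K → K → ℝ) (τ : ℕ → ℕ) (p q : ↥(range (embMap f τ)))
    (φ : goodSet f τ) : |p.1 φ - q.1 φ| ≤ factorD f τ p q :=
  le_ciSup (factorD_bdd f τ p q) φ

theorem factorD_nonneg (f : K → K → ℝ) (τ : ℕ → ℕ) (p q : ↥(range (embMap f τ))) :
    0 ≤ factorD f τ p q :=
  Real.iSup_nonneg fun φ => abs_nonneg _

theorem factorD_metric (f : K → K → ℝ) (τ : ℕ → ℕ) : IsMetricFun (factorD f τ) := by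
  refine ⟨?_, ?_, ?_⟩
  · intro p q
    unfold factorD
    congr 1
    funext φ
    exact abs_sub_comm _ _
  · intro p q
    constructor
    · intro h0
      apply Subtype.ext
      funext φ
      have hle := le_factorD f τ p q φ
      rw [h0] at hle
      have := abs_nonneg (p.1 φ - q.1 φ)
      have : |p.1 φ - q.1 φ| = 0 := le_antisymm hle this
      exact sub_eq_zero.mp (abs_eq_zero.mp this)
    · rintro rfl
      refine le_antisymm (Real.iSup_le (fun φ => by simp) le_rfl) (factorD_nonneg f τ p p)
  · intro p q r
    refine Real.iSup_le (fun φ => ?_)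
      (add_nonneg (factorD_nonneg f τ p q) (factorD_nonneg f τ q r))
    calc |p.1 φ - r.1 φ| ≤ |p.1 φ - q.1 φ| + |q.1 φ - r.1 φ| := abs_sub_le _ _ _
      _ ≤ factorD f τ p q + factorD f τ q r :=
        add_le_add (le_factorD f τ p q φ) (le_factorD f τ q r φ)

theorem factorD_lsc (f : K → K → ℝ) (τ : ℕ → ℕ) : LSC (factorD f τ) := by
  rw [LSC, lowerSemicontinuous_iff_isOpen_preimage]
  intro r
  rcases isEmpty_or_nonempty (goodSet f τ) with hemp | hne
  · have hzero : ∀ pq : ↥(range (embMap f τ)) × ↥(range (embMap f τ)),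
        factorD f τ pq.1 pq.2 = 0 := fun pq => Real.iSup_of_isEmpty _
    rcases lt_or_ge r 0 with hr | hr
    · convert isOpen_univ
      ext pq
      simp [hzero pq, mem_preimage, hr]
    · convert isOpen_empty
      ext pq
      simp only [mem_preimage, mem_Ioi, hzero pq, mem_empty_iff_false, iff_false, not_lt]
      exact hr
  · have : (fun pq : ↥(range (embMap f τ)) × ↥(range (embMap f τ)) =>
        factorD f τ pq.1 pq.2) ⁻¹' Ioi r =
        ⋃ φ : goodSet f τ, {pq : ↥(range (embMap f τ)) × ↥(range (embMap f τ)) |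
          r < |pq.1.1 φ - pq.2.1 φ|} := by
      ext pq
      simp only [mem_preimage, mem_Ioi, mem_iUnion, mem_setOf_eq]
      constructor
      · intro hlt
        exact exists_lt_of_lt_ciSup hlt
      · rintro ⟨φ, hφ⟩
        exact hφ.trans_le (le_ciSup (factorD_bdd f τ pq.1 pq.2) φ)
    rw [this]
    apply isOpen_iUnion
    intro φ
    have hcont : Continuous (fun pq : ↥(range (embMap f τ)) × ↥(range (embMap f τ)) =>
        |pq.1.1 φ - pq.2.1 φ|) := by
      apply Continuous.abs
      exact ((continuous_apply φ).comp (continuous_subtype_val.comp continuous_fst)).sub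
        ((continuous_apply φ).comp (continuous_subtype_val.comp continuous_snd))
    exact isOpen_lt continuous_const hcont

theorem fragments_factorD [CompactSpace K] [T2Space K] {f : K → K → ℝ}
    (hfrag : Fragments f) (τ : ℕ → ℕ) : Fragments (factorD f τ) := by
  have hπc : Continuous (fun x : K => (⟨embMap f τ x, mem_range_self x⟩ :
      ↥(range (embMap f τ)))) := (continuous_embMap f τ).subtype_mk _
  have hπs : Function.Surjective (fun x : K => (⟨embMap f τ x, mem_range_self x⟩ :
      ↥(range (embMap f τ)))) := by
    rintro ⟨-, x, rfl⟩
    exact ⟨x, rfl⟩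
  apply fragments_of_pullback hπc hπs
  intro L hL ε hε
  obtain ⟨n, hn⟩ := exists_nat_one_div_lt hε
  obtain ⟨V, hVo, hVne, hVd⟩ := hfrag L hL (1 / ((τ n : ℝ) + 1)) (by positivity)
  refine ⟨V, hVo, hVne, fun x hx y hy => ?_⟩
  have hle : factorD f τ ⟨embMap f τ x, mem_range_self x⟩ ⟨embMap f τ y, mem_range_self y⟩
      ≤ 1 / ((n : ℝ) + 1) := by
    refine Real.iSup_le (fun φ => ?_) (by positivity)
    exact φ.2.2.2 n x y (hVd x hx y hy).le
  exact lt_of_le_of_lt hle hn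

/-- Existence of a modulus level for a continuous function, using compactness and lower
semicontinuity of the quasi metric. -/
theorem exists_level [CompactSpace K] {f : K → K → ℝ} (hq : IsQuasiMetric f) (hlsc : LSC f)
    {h : K → ℝ} (hcont : Continuous h) (n : ℕ) :
    ∃ m : ℕ, ∀ u v : K, f u v ≤ 1 / ((m : ℝ) + 1) → |h u - h v| ≤ 1 / ((n : ℝ) + 1) := by
  by_contra hcon
  push_neg at hcon
  -- hcon : ∀ m, ∃ u v, f u v ≤ 1/(m+1) ∧ 1/(n+1) < |h u - h v|
  set T : ℕ → Set (K × K) := fun m =>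
    {p | f p.1 p.2 ≤ 1 / ((m : ℝ) + 1) ∧ 1 / ((n : ℝ) + 1) ≤ |h p.1 - h p.2|} with hT
  have hTcl : ∀ m, IsClosed (T m) := by
    intro m
    apply IsClosed.inter
    · exact lowerSemicontinuous_iff_isClosed_preimage.mp hlsc (1 / ((m : ℝ) + 1))
    · exact isClosed_le continuous_const
        (((hcont.comp continuous_fst).sub (hcont.comp continuous_snd)).abs)
  have hTne : ∀ m, (T m).Nonempty := by
    intro m
    obtain ⟨u, v, h1, h2⟩ := hcon m
    exact ⟨(u, v), h1, h2.le⟩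
  have hTmono : ∀ {a b : ℕ}, a ≤ b → T b ⊆ T a := by
    intro a b hab p hp
    refine ⟨hp.1.trans ?_, hp.2⟩
    apply one_div_le_one_div_of_le (by positivity)
    have : (a : ℝ) ≤ b := Nat.cast_le.mpr hab
    linarith
  have hTdir : Directed (· ⊇ ·) T := fun a b =>
    ⟨max a b, hTmono (le_max_left a b), hTmono (le_max_right a b)⟩
  obtain ⟨p, hp⟩ := IsCompact.nonempty_iInter_of_directed_nonempty_isCompact_isClosed T hTdir
    hTne (fun m => (hTcl m).isCompact) hTcl
  rw [mem_iInter] at hp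
  have hle0 : f p.1 p.2 ≤ 0 := by
    by_contra hpos
    push_neg at hpos
    obtain ⟨m, hm⟩ := exists_nat_one_div_lt hpos
    exact absurd ((hp m).1) (not_le.mpr hm)
  have heq : p.1 = p.2 := (hq.2.2 _ _).mp (le_antisymm hle0 (hq.1 _ _))
  have := (hp 0).2
  rw [heq] at this
  simp only [sub_self, abs_zero] at this
  have : (1 : ℝ) / ((n : ℝ) + 1) > 0 := by positivity
  linarith [(hp 0).2, this]

end Construction

/-- Every quasi Radon-Nikodým compact space embeds into a product of Radon-Nikodým
compact spaces with at most `𝔡` factors. -/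
theorem statement1 {K : Type u} [TopologicalSpace K] [CompactSpace K] [T2Space K]
    (hqRN : ∃ f : K → K → ℝ, IsQuasiMetric f ∧ LSC f ∧ Fragments f) :
    ∃ (I : Type u) (Ki : I → Type u) (_ : ∀ i, TopologicalSpace (Ki i)),
      Cardinal.mk I ≤ Cardinal.lift.{u} cardinalD ∧
      (∀ i, CompactSpace (Ki i)) ∧ (∀ i, T2Space (Ki i)) ∧
      (∀ i, ∃ d : Ki i → Ki i → ℝ, IsMetricFun d ∧ LSC d ∧ Fragments d) ∧
      ∃ e : K → (∀ i, Ki i), Topology.IsEmbedding e := by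
  obtain ⟨f, hq, hlsc, hfrag⟩ := hqRN
  have hDne : { c | ∃ S : Set (ℕ → ℕ), (∀ σ : ℕ → ℕ, ∃ τ ∈ S, σ ≤ τ) ∧ #S = c }.Nonempty :=
    ⟨#(univ : Set (ℕ → ℕ)), univ, fun σ => ⟨σ, mem_univ σ, le_rfl⟩, rfl⟩
  have hmem : cardinalD ∈
      { c | ∃ S : Set (ℕ → ℕ), (∀ σ : ℕ → ℕ, ∃ τ ∈ S, σ ≤ τ) ∧ #S = c } := csInf_mem hDne
  obtain ⟨S, hScof, hScard⟩ := hmem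
  refine ⟨ULift.{u} ↥S, fun i => ↥(range (embMap f i.down.1)), fun i => inferInstance,
    ?_, ?_, ?_, ?_, ?_⟩
  · rw [Cardinal.mk_uLift, hScard]
  · intro i
    exact isCompact_iff_compactSpace.mp (isCompact_range (continuous_embMap f i.down.1))
  · intro i
    infer_instance
  · intro i
    exact ⟨factorD f i.down.1, factorD_metric f i.down.1, factorD_lsc f i.down.1,
      fragments_factorD hfrag i.down.1⟩
  · refine ⟨fun x i => ⟨embMap f i.down.1 x, mem_range_self x⟩, ?_⟩
    have hcont : Continuous (fun x : K => fun i : ULift.{u} ↥S =>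
        (⟨embMap f i.down.1 x, mem_range_self x⟩ : ↥(range (embMap f i.down.1)))) :=
      continuous_pi fun i => (continuous_embMap f i.down.1).subtype_mk _
    have hinj : Function.Injective (fun x : K => fun i : ULift.{u} ↥S =>
        (⟨embMap f i.down.1 x, mem_range_self x⟩ : ↥(range (embMap f i.down.1)))) := by
      intro x y hxy
      by_contra hne
      obtain ⟨h, h0, h1, hIcc⟩ := exists_continuous_zero_one_of_isClosed
        (isClosed_singleton (x := x)) (isClosed_singleton (x := y))
        (Set.disjoint_singleton.mpr hne)
      choose σ hσ using fun n => exists_level hq hlsc h.continuous n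
      obtain ⟨τ, hτS, hστ⟩ := hScof σ
      have hgood : (⇑h : K → ℝ) ∈ goodSet f τ := by
        refine ⟨h.continuous, hIcc, fun n u v huv => hσ n u v (huv.trans ?_)⟩
        apply one_div_le_one_div_of_le (by positivity)
        have : (σ n : ℝ) ≤ (τ n : ℝ) := Nat.cast_le.mpr (hστ n)
        linarith
      have hcoord := congrFun (congrArg Subtype.val
        (congrFun hxy (ULift.up ⟨τ, hτS⟩))) ⟨⇑h, hgood⟩
      have hx0 : h x = 0 := h0 (mem_singleton x)
      have hy1 : h y = 1 := h1 (mem_singleton y)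
      have : h x = h y := hcoord
      rw [hx0, hy1] at this
      norm_num at this
    exact (hcont.isClosedEmbedding hinj).toIsEmbedding
end

section
/- Let K be a compact subset of the cube [0,1]^Γ. Then the following are equivalent: (1) there exists a lower semicontinuous quasi metric on K which fragments K (K is quasi Radon-Nikodým compact); (2) there exists a map σ : Γ → P such that the function f(x,y) = sup_{γ∈Γ} h^{σ(γ)}(|x_γ − y_γ|), which is automatically a lower semicontinuous quasi metric, fragments K. -/
/-!
If a lower semicontinuous quasi metric `g` fragments the compact set `K`, then for each coordinate
`γ` and each `n`, `g` attains a positive minimum `δ γ n` on the compact set of pairs with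
`|x γ - y γ| ≥ 1/(n+1)`. Choosing `σ γ ∈ P` with `1/σ γ n ≤ δ γ n` gives
`h^{σ γ}(|x γ - y γ|) ≤ g x y`, so the supremum `f` is dominated by `g` on `K` and inherits the
fragmentation. Conversely, `f` is a bounded supremum of lower semicontinuous functions, each
positive as soon as `x γ ≠ y γ`, hence a lower semicontinuous quasi metric.
-/

open Set Topology Cardinal

/-- `P`: the set of strictly increasing sequences of positive integers. -/
def Pset : Set (ℕ → ℕ) := {σ | StrictMono σ ∧ ∀ n, 0 < σ n}

/-- The function `h^σ : [0,∞) → ℝ`: `h^σ(0) = 0`, `h^σ(t) = 1/σ_n` whenever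
`1/(n+1) < t ≤ 1/n` (so that `n = ⌊1/t⌋`), and `h^σ(t) = 1/σ_1` for `t > 1`. -/
noncomputable def hFun (σ : ℕ → ℕ) (t : ℝ) : ℝ :=
  if t ≤ 0 then 0
  else if 1 < t then ((σ 1 : ℝ))⁻¹
  else ((σ (Nat.floor (1 / t)) : ℝ))⁻¹

lemma hFun_of_nonpos (σ : ℕ → ℕ) {t : ℝ} (ht : t ≤ 0) : hFun σ t = 0 := if_pos ht

lemma hFun_nonneg (σ : ℕ → ℕ) (t : ℝ) : 0 ≤ hFun σ t := by
  unfold hFun; split_ifs <;> positivity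

lemma hFun_le_one (σ : ℕ → ℕ) (t : ℝ) : hFun σ t ≤ 1 := by
  unfold hFun; split_ifs <;> simp [Nat.cast_inv_le_one]

lemma exists_hFun_eq_inv (σ : ℕ → ℕ) {t : ℝ} (ht : 0 < t) :
    ∃ n : ℕ, 1 ≤ n ∧ 1 / ((n : ℝ) + 1) < t ∧
      (∀ k : ℕ, 1 ≤ k → 1 / ((k : ℝ) + 1) < t → n ≤ k) ∧ hFun σ t = ((σ n : ℝ))⁻¹ := by
  rcases lt_or_ge 1 t with h1 | h1
  · refine ⟨1, le_rfl, by norm_num; linarith, fun k hk _ => hk, ?_⟩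
    unfold hFun; rw [if_neg ht.not_ge, if_pos h1]
  · refine ⟨⌊1 / t⌋₊, Nat.le_floor ?_, ?_, fun k _ hk => ?_, ?_⟩
    · rw [Nat.cast_one, le_div_iff₀ ht]; linarith
    · rw [div_lt_iff₀ (by positivity), ← div_lt_iff₀' ht]
      exact Nat.lt_floor_add_one _
    · rw [div_lt_iff₀ (by positivity), ← div_lt_iff₀' ht] at hk
      exact Nat.lt_add_one_iff.mp ((Nat.floor_lt (by positivity)).mpr (by exact_mod_cast hk))
    · unfold hFun; rw [if_neg ht.not_ge, if_neg h1.not_gt]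

lemma hFun_pos {σ : ℕ → ℕ} (hσ : σ ∈ Pset) {t : ℝ} (ht : 0 < t) : 0 < hFun σ t := by
  obtain ⟨n, -, -, -, heq⟩ := exists_hFun_eq_inv σ ht
  rw [heq]
  exact inv_pos.mpr (by exact_mod_cast hσ.2 n)

lemma inv_le_hFun {σ : ℕ → ℕ} (hσ : σ ∈ Pset) {n : ℕ} (hn : 1 ≤ n) {t : ℝ}
    (ht : 1 / ((n : ℝ) + 1) < t) : ((σ n : ℝ))⁻¹ ≤ hFun σ t := by
  obtain ⟨m, -, -, hleast, heq⟩ := exists_hFun_eq_inv σ (lt_trans (by positivity) ht)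
  rw [heq]
  exact inv_anti₀ (by exact_mod_cast hσ.2 m) (by exact_mod_cast hσ.1.monotone (hleast n hn ht))

lemma hFun_le_of_forall {σ : ℕ → ℕ} {t b : ℝ} (hb : 0 ≤ b)
    (h : ∀ n : ℕ, 1 / ((n : ℝ) + 1) ≤ t → ((σ n : ℝ))⁻¹ ≤ b) : hFun σ t ≤ b := by
  rcases le_or_gt t 0 with ht | ht
  · rwa [hFun_of_nonpos σ ht]
  · obtain ⟨n, -, hnt, -, heq⟩ := exists_hFun_eq_inv σ ht
    exact heq ▸ h n hnt.le

lemma lowerSemicontinuous_hFun {σ : ℕ → ℕ} (hσ : σ ∈ Pset) : LowerSemicontinuous (hFun σ) := by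
  intro t y hy
  rcases le_or_gt t 0 with ht | ht
  · rw [hFun_of_nonpos σ ht] at hy
    exact Filter.Eventually.of_forall fun s => hy.trans_le (hFun_nonneg σ s)
  · obtain ⟨n, hn, hnt, -, heq⟩ := exists_hFun_eq_inv σ ht
    filter_upwards [isOpen_Ioi.mem_nhds hnt] with s hs
    exact (heq ▸ hy).trans_le (inv_le_hFun hσ hn hs)

lemma exists_mem_pset_inv_le (δ : ℕ → ℝ) (hδ : ∀ n, 0 < δ n) :
    ∃ σ ∈ Pset, ∀ n, ((σ n : ℝ))⁻¹ ≤ δ n := by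
  set σ : ℕ → ℕ := fun n => n + 1 + ∑ k ∈ Finset.range (n + 1), ⌈1 / δ k⌉₊
  have hceil : ∀ n, ⌈1 / δ n⌉₊ ≤ σ n := fun n =>
    (Finset.single_le_sum (f := fun k => ⌈1 / δ k⌉₊) (fun _ _ => Nat.zero_le _)
      (Finset.self_mem_range_succ n)).trans (Nat.le_add_left _ _)
  refine ⟨σ, ⟨strictMono_nat_of_lt_succ fun n => ?_, fun n => by positivity⟩, fun n => ?_⟩
  · simp only [σ, Finset.sum_range_succ _ (n + 1)]
    omega
  · rw [inv_le_comm₀ (by positivity) (hδ n), inv_eq_one_div]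
    exact (Nat.le_ceil _).trans (by exact_mod_cast hceil n)

lemma IsCompact.exists_pos_le_of_lowerSemicontinuous {α : Type*} [TopologicalSpace α]
    {f : α → ℝ} {C : Set α} (hC : IsCompact C) (hf : LowerSemicontinuous f)
    (hpos : ∀ p ∈ C, 0 < f p) : ∃ δ > 0, ∀ p ∈ C, δ ≤ f p := by
  rcases C.eq_empty_or_nonempty with rfl | hne
  · exact ⟨1, one_pos, by simp⟩
  · obtain ⟨p, hp, hmin⟩ := (hf.lowerSemicontinuousOn C).exists_isMinOn hne hC
    exact ⟨f p, hpos p hp, hmin⟩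

lemma IsQuasiMetric.pos {X : Type*} {g : X → X → ℝ} (hg : IsQuasiMetric g) {x y : X}
    (hxy : x ≠ y) : 0 < g x y :=
  (hg.1 x y).lt_of_ne fun h => hxy ((hg.2.2 x y).mp h.symm)

lemma IsQuasiMetric.comp_injective {X Y : Type*} {g : X → X → ℝ} (hg : IsQuasiMetric g)
    {e : Y → X} (he : Function.Injective e) : IsQuasiMetric fun a b => g (e a) (e b) :=
  ⟨fun _ _ => hg.1 _ _, fun _ _ => hg.2.1 _ _, fun _ _ => (hg.2.2 _ _).trans he.eq_iff⟩

lemma LSC.comp_continuous {X Y : Type*} [TopologicalSpace X] [TopologicalSpace Y]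
    {g : X → X → ℝ} (hg : LSC g) {e : Y → X} (he : Continuous e) :
    LSC fun a b => g (e a) (e b) :=
  hg.comp (he.prodMap he)

lemma exists_pos_le_of_le_abs_sub {X : Type*} [TopologicalSpace X] [CompactSpace X]
    {g : X → X → ℝ} (hg : IsQuasiMetric g) (hlsc : LSC g) {φ : X → ℝ} (hφ : Continuous φ)
    {r : ℝ} (hr : 0 < r) : ∃ δ > 0, ∀ x y, r ≤ |φ x - φ y| → δ ≤ g x y := by
  have hclosed : IsClosed {p : X × X | r ≤ |φ p.1 - φ p.2|} :=
    isClosed_le continuous_const ((hφ.comp continuous_fst).sub (hφ.comp continuous_snd)).abs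
  obtain ⟨δ, hδ, hle⟩ := hclosed.isCompact.exists_pos_le_of_lowerSemicontinuous hlsc
    fun p hp => hg.pos fun h => by simp only [mem_ofPred_eq, h, sub_self, abs_zero] at hp; linarith
  exact ⟨δ, hδ, fun x y hxy => hle (x, y) hxy⟩

lemma Fragments.mono {X : Type*} [TopologicalSpace X] {f g : X → X → ℝ} (hg : Fragments g)
    (hfg : ∀ x y, f x y ≤ g x y) : Fragments f := fun L hL ε hε =>
  let ⟨V, hV, hVL, hsmall⟩ := hg L hL ε hε
  ⟨V, hV, hVL, fun x hx y hy => (hfg x y).trans_lt (hsmall x hx y hy)⟩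

lemma fragments_restrict_iff {X : Type*} [TopologicalSpace X] {f : X → X → ℝ} {K : Set X} :
    Fragments (fun x y : K => f x y) ↔ FragmentsOn f K := by
  constructor
  · intro hf L hLK ⟨l, hl⟩ ε hε
    obtain ⟨V', hV', ⟨z, hzV, hzL⟩, hsmall⟩ :=
      hf (Subtype.val ⁻¹' L) ⟨⟨l, hLK hl⟩, hl⟩ ε hε
    obtain ⟨V, hV, rfl⟩ := isOpen_induced_iff.mp hV'
    refine ⟨V, hV, ⟨z, hzV, hzL⟩, fun x hx y hy => ?_⟩
    exact hsmall ⟨x, hLK hx.2⟩ hx ⟨y, hLK hy.2⟩ hy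
  · intro hf L hL ε hε
    obtain ⟨V, hV, ⟨_, hzV, z, hzL, rfl⟩, hsmall⟩ :=
      hf (Subtype.val '' L) (image_subset_iff.mpr fun z _ => z.2) (hL.image _) ε hε
    refine ⟨Subtype.val ⁻¹' V, hV.preimage continuous_subtype_val, ⟨z, hzV, hzL⟩, ?_⟩
    exact fun x hx y hy => hsmall x ⟨hx.1, mem_image_of_mem _ hx.2⟩ y ⟨hy.1, mem_image_of_mem _ hy.2⟩

section hSup

variable {Γ : Type*}

noncomputable def hSup (σ : Γ → ℕ → ℕ) (x y : Γ → ℝ) : ℝ :=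
  ⨆ γ, hFun (σ γ) |x γ - y γ|

lemma bddAbove_range_hFun (σ : Γ → ℕ → ℕ) (x y : Γ → ℝ) :
    BddAbove (range fun γ => hFun (σ γ) |x γ - y γ|) :=
  ⟨1, by rintro _ ⟨γ, rfl⟩; exact hFun_le_one _ _⟩

lemma hSup_nonneg (σ : Γ → ℕ → ℕ) (x y : Γ → ℝ) : 0 ≤ hSup σ x y :=
  Real.iSup_nonneg fun _ => hFun_nonneg _ _

lemma isQuasiMetric_hSup {σ : Γ → ℕ → ℕ} (hσ : ∀ γ, σ γ ∈ Pset) : IsQuasiMetric (hSup σ) := by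
  refine ⟨hSup_nonneg σ, fun x y => by simp only [hSup, abs_sub_comm], fun x y => ⟨?_, ?_⟩⟩
  · intro h
    funext γ
    by_contra hne
    have hpos := (hFun_pos (hσ γ) (abs_pos.mpr (sub_ne_zero.mpr hne))).trans_le
      (le_ciSup (bddAbove_range_hFun σ x y) γ)
    exact hpos.ne' h
  · rintro rfl
    refine le_antisymm (Real.iSup_le (fun γ => ?_) le_rfl) (hSup_nonneg σ x x)
    rw [sub_self, abs_zero, hFun_of_nonpos _ le_rfl]

lemma lsc_hSup {σ : Γ → ℕ → ℕ} (hσ : ∀ γ, σ γ ∈ Pset) : LSC (hSup σ) :=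
  lowerSemicontinuous_ciSup (fun p => bddAbove_range_hFun σ p.1 p.2) fun γ =>
    (lowerSemicontinuous_hFun (hσ γ)).comp
      (((continuous_apply γ).comp continuous_fst).sub ((continuous_apply γ).comp continuous_snd)).abs

end hSup

theorem statement2_general {Γ : Type*} (K : Set (Γ → ℝ))
    (hcomp : IsCompact K) :
    (∃ g : K → K → ℝ, IsQuasiMetric g ∧ LSC g ∧ Fragments g) ↔
      (∃ σ : Γ → (ℕ → ℕ), (∀ γ, σ γ ∈ Pset) ∧
        FragmentsOn (fun x y => ⨆ γ, hFun (σ γ) |x γ - y γ|) K) := by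
  constructor
  · rintro ⟨g, hg, hlsc, hfrag⟩
    have : CompactSpace K := isCompact_iff_compactSpace.mp hcomp
    have hsep : ∀ (γ : Γ) (n : ℕ), ∃ δ > 0,
        ∀ x y : K, 1 / ((n : ℝ) + 1) ≤ |x.1 γ - y.1 γ| → δ ≤ g x y := fun γ n =>
      exists_pos_le_of_le_abs_sub hg hlsc ((continuous_apply γ).comp continuous_subtype_val)
        (by positivity)
    choose δ hδ hδg using hsep
    choose σ hσ hσδ using fun γ => exists_mem_pset_inv_le (δ γ) (hδ γ)
    have hle : ∀ x y : K, hSup σ x y ≤ g x y := fun x y =>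
      Real.iSup_le (fun γ => hFun_le_of_forall (hg.1 x y) fun n hn =>
        (hσδ γ n).trans (hδg γ n x y hn)) (hg.1 x y)
    exact ⟨σ, hσ, fragments_restrict_iff.mp (hfrag.mono hle)⟩
  · rintro ⟨σ, hσ, hfrag⟩
    exact ⟨fun x y : K => hSup σ x y, (isQuasiMetric_hSup hσ).comp_injective Subtype.val_injective,
      (lsc_hSup hσ).comp_continuous continuous_subtype_val, fragments_restrict_iff.mpr hfrag⟩

/-- For a compact subset `K` of the cube `[0,1]^Γ`, `K` is quasi Radon-Nikodým if and
only if there is `σ : Γ → P` such that `f(x,y) = sup_γ h^{σ(γ)}(|x_γ - y_γ|)` fragments `K`. -/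
theorem statement2 {Γ : Type*} (K : Set (Γ → ℝ))
    (hcube : ∀ x ∈ K, ∀ γ, x γ ∈ Set.Icc (0 : ℝ) 1) (hcomp : IsCompact K) :
    (∃ g : K → K → ℝ, IsQuasiMetric g ∧ LSC g ∧ Fragments g) ↔
      (∃ σ : Γ → (ℕ → ℕ), (∀ γ, σ γ ∈ Pset) ∧
        FragmentsOn (fun x y => ⨆ γ, hFun (σ γ) |x γ - y γ|) K) :=
  statement2_general K hcomp
end

section
/- Let g₀ : [0,1] × [0,1] → [0,1] be a lower semicontinuous quasi metric on [0,1]. Then there exists a strictly increasing sequence τ ∈ P of positive integers such that h^τ(|t − s|) ≤ g₀(t,s) for all t, s ∈ [0,1]. -/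
open Set Topology Cardinal

/-- A lower semicontinuous function that is positive on a compact closed set admits a
positive uniform lower bound of the form `1/m` there. -/
lemma aux_lsc_bound {Y : Type*} [TopologicalSpace Y] (g : Y → ℝ)
    (hlsc : LowerSemicontinuous g)
    (K : Set Y) (hK : IsCompact K) (hKcl : IsClosed K) (hpos : ∀ y ∈ K, 0 < g y) :
    ∃ m : ℕ, 0 < m ∧ ∀ y ∈ K, ((m : ℝ))⁻¹ ≤ g y := by
  by_contra h
  push_neg at h
  have hne : ∀ m : ℕ, ({y ∈ K | g y ≤ ((m+1 : ℕ) : ℝ)⁻¹}).Nonempty := by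
    intro m
    obtain ⟨y, hy, hlt⟩ := h (m+1) (Nat.succ_pos m)
    exact ⟨y, hy, hlt.le⟩
  have hcl : ∀ m : ℕ, IsClosed {y ∈ K | g y ≤ ((m+1 : ℕ) : ℝ)⁻¹} := by
    intro m
    exact hKcl.inter (lowerSemicontinuous_iff_isClosed_preimage.1 hlsc _)
  have hsub : ∀ m : ℕ, {y ∈ K | g y ≤ ((m+2 : ℕ) : ℝ)⁻¹} ⊆ {y ∈ K | g y ≤ ((m+1 : ℕ) : ℝ)⁻¹} := by
    intro m y hy
    refine ⟨hy.1, hy.2.trans ?_⟩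
    apply inv_anti₀ (by positivity) (by push_cast; linarith)
  have := IsCompact.nonempty_iInter_of_sequence_nonempty_isCompact_isClosed
    (fun m => {y ∈ K | g y ≤ ((m+1 : ℕ) : ℝ)⁻¹}) hsub hne
    (hK.of_isClosed_subset (hcl 0) (fun y hy => hy.1)) hcl
  obtain ⟨y, hy⟩ := this
  simp only [mem_iInter, mem_setOf_eq] at hy
  have hyK := (hy 0).1
  have : g y ≤ 0 := by
    by_contra hgy
    push_neg at hgy
    obtain ⟨m, hm⟩ := exists_nat_one_div_lt hgy
    have := (hy m).2
    rw [one_div] at hm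
    push_cast at this hm
    linarith
  exact absurd (hpos y hyK) (not_lt.2 this)

/-- For every lower semicontinuous quasi metric `g₀` on `[0,1]` with values in `[0,1]`,
there is `τ ∈ P` with `h^τ(|t - s|) ≤ g₀(t,s)` for all `t, s ∈ [0,1]`. -/
theorem statement3 (g₀ : Set.Icc (0 : ℝ) 1 → Set.Icc (0 : ℝ) 1 → ℝ)
    (hrange : ∀ t s, g₀ t s ∈ Set.Icc (0 : ℝ) 1)
    (hq : IsQuasiMetric g₀)
    (hlsc : LowerSemicontinuous (fun p : Set.Icc (0 : ℝ) 1 × Set.Icc (0 : ℝ) 1 => g₀ p.1 p.2)) :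
    ∃ τ ∈ Pset, ∀ t s : Set.Icc (0 : ℝ) 1, hFun τ |(t : ℝ) - (s : ℝ)| ≤ g₀ t s := by
  haveI : CompactSpace (Set.Icc (0 : ℝ) 1) := isCompact_iff_compactSpace.mp isCompact_Icc
  obtain ⟨hnn, hsymm, hzero⟩ := hq
  -- for each n, the set where |t - s| ≥ 1/(n+1)
  have key : ∀ n : ℕ, ∃ m : ℕ, 0 < m ∧ ∀ t s : Set.Icc (0 : ℝ) 1,
      ((n : ℝ) + 1)⁻¹ ≤ |(t : ℝ) - (s : ℝ)| → ((m : ℝ))⁻¹ ≤ g₀ t s := by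
    intro n
    set K : Set (Set.Icc (0 : ℝ) 1 × Set.Icc (0 : ℝ) 1) := {p | ((n : ℝ) + 1)⁻¹ ≤ |(p.1 : ℝ) - (p.2 : ℝ)|} with hKdef
    have hcont : Continuous fun p : Set.Icc (0 : ℝ) 1 × Set.Icc (0 : ℝ) 1 => |(p.1 : ℝ) - (p.2 : ℝ)| := by
      fun_prop
    have hKcl : IsClosed K := isClosed_le continuous_const hcont
    have hKcp : IsCompact K := hKcl.isCompact
    have hpos : ∀ p ∈ K, 0 < g₀ p.1 p.2 := by
      rintro ⟨t, s⟩ hp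
      have hne : t ≠ s := by
        intro h
        rw [hKdef, mem_setOf_eq, h, sub_self, abs_zero] at hp
        have : (0 : ℝ) < ((n : ℝ) + 1)⁻¹ := by positivity
        linarith
      rcases lt_or_eq_of_le (hnn t s) with h | h
      · exact h
      · exact absurd ((hzero t s).1 h.symm) hne
    obtain ⟨m, hm, hmb⟩ := aux_lsc_bound _ hlsc K hKcp hKcl hpos
    exact ⟨m, hm, fun t s h => hmb (t, s) h⟩
  choose N hNpos hN using key
  set τ : ℕ → ℕ := fun n => n + 1 + ∑ k ∈ Finset.range (n + 1), N k with hτ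
  have hτge : ∀ n, N n ≤ τ n := by
    intro n
    calc N n ≤ ∑ k ∈ Finset.range (n + 1), N k :=
          Finset.single_le_sum (fun k _ => Nat.zero_le (N k)) (Finset.self_mem_range_succ n)
      _ ≤ τ n := Nat.le_add_left _ _
  refine ⟨τ, ⟨?_, fun n => by positivity⟩, ?_⟩
  · apply strictMono_nat_of_lt_succ
    intro n
    simp only [hτ, Finset.sum_range_succ]
    omega
  · intro t s
    have ht := t.2
    have hs := s.2
    simp only [mem_Icc] at ht hs
    have hd1 : |(t : ℝ) - (s : ℝ)| ≤ 1 := by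
      rw [abs_le]; constructor <;> linarith [ht.1, ht.2, hs.1, hs.2]
    unfold hFun
    split_ifs with h1 h2
    · exact hnn t s
    · linarith
    · push_neg at h1 h2
      set d := |(t : ℝ) - (s : ℝ)| with hdd
      set n := Nat.floor (1 / d) with hn
      have hdpos : 0 < d := h1
      have hfl : (1 : ℝ) / d < (n : ℝ) + 1 := Nat.lt_floor_add_one _
      have hdn : ((n : ℝ) + 1)⁻¹ ≤ d := by
        rw [div_lt_iff₀ hdpos] at hfl
        rw [inv_le_iff_one_le_mul₀ (by positivity)]
        nlinarith
      have hb := hN n t s hdn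
      refine le_trans ?_ hb
      apply inv_anti₀
      · exact_mod_cast hNpos n
      · exact_mod_cast hτge n
end

section
/- Let K and L be compact Hausdorff spaces, let f : K × K → ℝ be a symmetric map which fragments K, and let p : K → L be a continuous surjection. Then the map g(x,y) = inf{f(t,s) : t,s ∈ K, p(t) = x, p(s) = y} fragments L; in particular, any map g' : L × L → ℝ with g' ≤ g pointwise also fragments L. -/
open Set Topology Cardinal

theorem main_frag {K L : Type*} [TopologicalSpace K] [CompactSpace K] [T2Space K]
    [TopologicalSpace L] [CompactSpace L] [T2Space L]
    (f : K → K → ℝ)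
    (hfrag : ∀ Lset : Set K, Lset.Nonempty → ∀ ε : ℝ, 0 < ε →
      ∃ V : Set K, IsOpen V ∧ (V ∩ Lset).Nonempty ∧
        ∀ x ∈ V ∩ Lset, ∀ y ∈ V ∩ Lset, f x y < ε)
    (p : K → L) (hp : Continuous p) (hsurj : Function.Surjective p) :
    ∀ M : Set L, M.Nonempty → ∀ ε : ℝ, 0 < ε →
      ∃ V : Set L, IsOpen V ∧ (V ∩ M).Nonempty ∧
        ∀ x ∈ V ∩ M, ∀ y ∈ V ∩ M,
          sInf {r : ℝ | ∃ t s : K, p t = x ∧ p s = y ∧ f t s = r} < ε := by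
  intro M hM ε hε
  have hclosed : IsClosedMap p := hp.isClosedMap
  -- minimal compact C with M ⊆ p '' C
  obtain ⟨C, -, ⟨⟨hCc, hCM⟩, hmin⟩⟩ := zorn_superset_nonempty
      {C : Set K | IsCompact C ∧ M ⊆ p '' C}
      (fun c hc hchain hcne => by
        refine ⟨⋂₀ c, ⟨?_, ?_⟩, fun s hs => sInter_subset_of_mem hs⟩
        · obtain ⟨s, hs⟩ := hcne
          exact IsCompact.of_isClosed_subset (hc hs).1
            (isClosed_sInter fun t ht => (hc ht).1.isClosed) (sInter_subset_of_mem hs)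
        · intro x hx
          have hne : (⋂₀ ((fun C => C ∩ p ⁻¹' {x}) '' c)).Nonempty := by
            have : Nonempty ((fun C => C ∩ p ⁻¹' {x}) '' c) := by
              obtain ⟨s, hs⟩ := hcne
              exact ⟨⟨_, mem_image_of_mem _ hs⟩⟩
            apply IsCompact.nonempty_sInter_of_directed_nonempty_isCompact_isClosed
            · rintro _ ⟨a, ha, rfl⟩ _ ⟨b, hb, rfl⟩
              rcases hchain.total ha hb with h | h
              · exact ⟨_, mem_image_of_mem _ ha, Subset.rfl, inter_subset_inter_left _ h⟩
              · exact ⟨_, mem_image_of_mem _ hb, inter_subset_inter_left _ h, Subset.rfl⟩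
            · rintro _ ⟨a, ha, rfl⟩
              obtain ⟨t, ht, hpt⟩ := (hc ha).2 hx
              exact ⟨t, ht, hpt⟩
            · rintro _ ⟨a, ha, rfl⟩
              exact ((hc ha).1.inter_right (IsClosed.preimage hp isClosed_singleton))
            · rintro _ ⟨a, ha, rfl⟩
              exact IsClosed.inter (hc ha).1.isClosed (IsClosed.preimage hp isClosed_singleton)
          obtain ⟨t, ht⟩ := hne
          have h1 : ∀ a ∈ c, t ∈ a ∧ p t = x := by
            intro a ha
            have := ht _ (mem_image_of_mem _ ha)
            exact ⟨this.1, this.2⟩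
          obtain ⟨s, hs⟩ := hcne
          exact ⟨t, fun a ha => (h1 a ha).1, (h1 s hs).2⟩)
      univ ⟨isCompact_univ, fun x _ => (hsurj x).imp fun t ht => ⟨trivial, ht⟩⟩
  have hCne : C.Nonempty := by
    obtain ⟨x, hx⟩ := hM
    obtain ⟨t, ht, -⟩ := hCM hx
    exact ⟨t, ht⟩
  -- fragment C
  obtain ⟨U, hUo, hUne, hUf⟩ := hfrag C hCne ε hε
  -- minimality: C \ U fails to cover M
  have hnotcov : ¬ M ⊆ p '' (C \ U) := by
    intro hcov
    obtain ⟨t, htU, htC⟩ := hUne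
    exact (hmin ⟨hCc.diff hUo, hcov⟩ diff_subset htC).2 htU
  obtain ⟨x₀, hx₀M, hx₀⟩ := not_subset.mp hnotcov
  refine ⟨(p '' (C \ U))ᶜ, (hclosed _ ((hCc.diff hUo).isClosed)).isOpen_compl,
    ⟨x₀, hx₀, hx₀M⟩, ?_⟩
  rintro x ⟨hxV, hxM⟩ y ⟨hyV, hyM⟩
  obtain ⟨t, htC, hpt⟩ := hCM hxM
  obtain ⟨s, hsC, hps⟩ := hCM hyM
  have htU : t ∈ U := by
    by_contra h
    exact hxV ⟨t, ⟨htC, h⟩, hpt⟩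
  have hsU : s ∈ U := by
    by_contra h
    exact hyV ⟨s, ⟨hsC, h⟩, hps⟩
  have hfts : f t s < ε := hUf t ⟨htU, htC⟩ s ⟨hsU, hsC⟩
  have hmem : f t s ∈ {r : ℝ | ∃ t s : K, p t = x ∧ p s = y ∧ f t s = r} :=
    ⟨t, s, hpt, hps, rfl⟩
  by_cases hbdd : BddBelow {r : ℝ | ∃ t s : K, p t = x ∧ p s = y ∧ f t s = r}
  · exact lt_of_le_of_lt (csInf_le hbdd hmem) hfts
  · rw [Real.sInf_of_not_bddBelow hbdd]; exact hε

/-- If a symmetric map `f` fragments the compact space `K` and `p : K → L` is a continuous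
surjection, then `g(x,y) = inf { f(t,s) : p(t) = x, p(s) = y }` fragments `L`, and so does
any `g' ≤ g`. -/
theorem statement4 {K L : Type*} [TopologicalSpace K] [CompactSpace K] [T2Space K]
    [TopologicalSpace L] [CompactSpace L] [T2Space L]
    (f : K → K → ℝ) (hsymm : ∀ x y, f x y = f y x) (hfrag : Fragments f)
    (p : K → L) (hp : Continuous p) (hsurj : Function.Surjective p) :
    Fragments (fun x y : L => sInf {r : ℝ | ∃ t s : K, p t = x ∧ p s = y ∧ f t s = r}) ∧
      ∀ g' : L → L → ℝ,
        (∀ x y, g' x y ≤ sInf {r : ℝ | ∃ t s : K, p t = x ∧ p s = y ∧ f t s = r}) →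
        Fragments g' := by
  have main := main_frag f hfrag p hp hsurj
  refine ⟨main, fun g' hg' M hM ε hε => ?_⟩
  obtain ⟨V, hVo, hVne, hVf⟩ := main M hM ε hε
  exact ⟨V, hVo, hVne, fun x hx y hy => lt_of_le_of_lt (hg' x y) (hVf x hx y hy)⟩
end

section
/- Let Γ be a set of cardinality less than 𝔟 and let K be a compact subset of the cube [0,1]^Γ such that some lower semicontinuous quasi metric fragments K (K is quasi Radon-Nikodým). Then there is a countable decomposition Γ = ⋃_{n∈ℕ} Γ_n such that the pseudometric d_{Γ_n} fragments K for every n ∈ ℕ. -/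
open Set Topology Cardinal

/-- The pseudometric `d_A` on `[0,1]^Γ` given by `d_A(x,y) = sup_{γ ∈ A} |x_γ - y_γ|`. -/
noncomputable def dGamma {Γ : Type*} (A : Set Γ) (x y : Γ → ℝ) : ℝ :=
  ⨆ γ : A, |x γ - y γ|

/-!
By compactness and lower semicontinuity, every coordinate `x ↦ x γ` is uniformly continuous with
respect to the quasi metric `f`: for each `m` there is `σ γ m` such that `f x y < 1/(σ γ m + 1)`
forces `|x γ - y γ| < 1/(m + 1)`. Since `|Γ| < 𝔟`, the family of moduli `σ γ` is σ-bounded, and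
on each piece `Γ_n` on which the moduli are bounded by a common `τ`, the pseudometric `d_{Γ_n}` is
uniformly controlled by `f`; so the `f`-small relatively open sets given by fragmentability are
also `d_{Γ_n}`-small.
-/

variable {X : Type*}

def UniformlyControlledBy (d f : X → X → ℝ) : Prop :=
  ∀ ε > 0, ∃ δ > 0, ∀ x y, f x y < δ → d x y < ε

theorem IsQuasiMetric.pos_of_ne {f : X → X → ℝ} (hf : IsQuasiMetric f) {x y : X} (h : x ≠ y) :
    0 < f x y :=
  (hf.1 x y).lt_of_ne' fun h0 => h ((hf.2.2 x y).1 h0)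

/-- `δ` is the minimum of `f` over the compact set where `g` oscillates by at least `ε`. -/
theorem uniformlyControlledBy_abs_sub_of_lsc [TopologicalSpace X] [CompactSpace X]
    {f : X → X → ℝ} (hf : LSC f) (hpos : ∀ x y, x ≠ y → 0 < f x y)
    {g : X → ℝ} (hg : Continuous g) :
    UniformlyControlledBy (fun x y => |g x - g y|) f := by
  intro ε hε
  set C : Set (X × X) := {p | ε ≤ |g p.1 - g p.2|}
  rcases C.eq_empty_or_nonempty with hC | hC
  · refine ⟨1, one_pos, fun x y _ => ?_⟩
    by_contra! h
    exact hC.subset (show (x, y) ∈ C from h)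
  · have hCc : IsCompact C := (isClosed_le continuous_const (by fun_prop)).isCompact
    obtain ⟨p, hpC, hmin⟩ := (hf.lowerSemicontinuousOn C).exists_isMinOn hC hCc
    have hp : p.1 ≠ p.2 := fun h => by
      have : ε ≤ |g p.1 - g p.2| := hpC
      rw [h, sub_self, abs_zero] at this
      linarith
    refine ⟨f p.1 p.2, hpos _ _ hp, fun x y hxy => ?_⟩
    by_contra! h
    exact (hmin (show (x, y) ∈ C from h)).not_gt hxy

theorem UniformlyControlledBy.exists_nat_modulus {d f : X → X → ℝ}
    (h : UniformlyControlledBy d f) (m : ℕ) :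
    ∃ k : ℕ, ∀ x y, f x y < 1 / (k + 1) → d x y < 1 / (m + 1) := by
  obtain ⟨δ, hδ, hd⟩ := h _ Nat.one_div_pos_of_nat
  obtain ⟨k, hk⟩ := exists_nat_one_div_lt hδ
  exact ⟨k, fun x y hxy => hd x y (hxy.trans hk)⟩

theorem uniformlyControlledBy_dGamma {Γ : Type*} {f : X → X → ℝ} {e : X → Γ → ℝ}
    {σ : Γ → ℕ → ℕ}
    (hσ : ∀ γ m x y, f x y < 1 / (σ γ m + 1) → |e x γ - e y γ| < 1 / (m + 1))
    {A : Set Γ} (hA : BddAbove (σ '' A)) :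
    UniformlyControlledBy (fun x y => dGamma A (e x) (e y)) f := by
  obtain ⟨τ, hτ⟩ := hA
  intro ε hε
  obtain ⟨m, hm⟩ := exists_nat_one_div_lt hε
  refine ⟨1 / (τ m + 1), Nat.one_div_pos_of_nat, fun x y hxy => ?_⟩
  refine lt_of_le_of_lt (Real.iSup_le (fun γ => ?_) Nat.one_div_pos_of_nat.le) hm
  have hστ : σ γ m ≤ τ m := hτ (mem_image_of_mem σ γ.2) m
  refine (hσ γ m x y (hxy.trans_le ?_)).le
  gcongr

theorem Fragments.fragmentsOn [TopologicalSpace X] {K : Set X} {f : K → K → ℝ}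
    (hf : Fragments f) {d : X → X → ℝ} (hd : UniformlyControlledBy (fun x y : K => d x y) f) :
    FragmentsOn d K := by
  intro L hLK ⟨x₀, hx₀⟩ ε hε
  obtain ⟨δ, hδ, hdδ⟩ := hd ε hε
  obtain ⟨V, hV, ⟨p, hpV, hpL⟩, hVsmall⟩ :=
    hf (Subtype.val ⁻¹' L) ⟨⟨x₀, hLK hx₀⟩, hx₀⟩ δ hδ
  obtain ⟨W, hW, rfl⟩ := isOpen_induced_iff.mp hV
  exact ⟨W, hW, ⟨p, hpV, hpL⟩, fun x hx y hy =>
    hdδ ⟨x, hLK hx.2⟩ ⟨y, hLK hy.2⟩ (hVsmall _ hx _ hy)⟩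

theorem sigmaBounded_range_of_mk_lt {ι : Type u} (h : #ι < lift.{u} cardinalB)
    (σ : ι → ℕ → ℕ) : SigmaBounded (range σ) := by
  by_contra hσ
  have hB : cardinalB ≤ #(range σ) := csInf_le' ⟨range σ, hσ, rfl⟩
  have hrange : lift.{u} #(range σ) ≤ #ι := by simpa using mk_range_le_lift (f := σ)
  exact ((lift_le.mpr hB).trans hrange).not_gt h

theorem SigmaBounded.exists_cover_bddAbove_image {ι : Type*} {σ : ι → ℕ → ℕ}
    (h : SigmaBounded (range σ)) :
    ∃ A : ℕ → Set ι, ⋃ n, A n = Set.univ ∧ ∀ n, BddAbove (σ '' A n) := by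
  obtain ⟨B, hcover, hB⟩ := h
  refine ⟨fun n => σ ⁻¹' B n, ?_, fun n => ?_⟩
  · rw [← preimage_iUnion, eq_univ_iff_forall]
    exact fun γ => hcover (mem_range_self γ)
  · obtain ⟨τ, hτ⟩ := hB n
    exact ⟨τ, forall_mem_image.2 fun γ hγ => hτ _ hγ⟩

theorem statement6_general {Γ : Type u} (hΓ : Cardinal.mk Γ < Cardinal.lift.{u} cardinalB)
    (K : Set (Γ → ℝ))
    (hcomp : IsCompact K)
    (hqRN : ∃ f : K → K → ℝ, IsQuasiMetric f ∧ LSC f ∧ Fragments f) :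
    ∃ Γn : ℕ → Set Γ, (⋃ n, Γn n) = Set.univ ∧
      ∀ n, FragmentsOn (dGamma (Γn n)) K := by
  obtain ⟨f, hf, hlsc, hfrag⟩ := hqRN
  have : CompactSpace K := isCompact_iff_compactSpace.mp hcomp
  choose σ hσ using fun γ => (uniformlyControlledBy_abs_sub_of_lsc hlsc
    (fun _ _ => hf.pos_of_ne) ((continuous_apply γ).comp continuous_subtype_val)).exists_nat_modulus
  obtain ⟨Γn, hcover, hbdd⟩ := (sigmaBounded_range_of_mk_lt hΓ σ).exists_cover_bddAbove_image
  exact ⟨Γn, hcover, fun n => hfrag.fragmentsOn (uniformlyControlledBy_dGamma hσ (hbdd n))⟩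

/-- For every quasi Radon-Nikodým compact subset `K` of a cube `[0,1]^Γ` with `|Γ| < 𝔟`,
there is a countable decomposition `Γ = ⋃_n Γ_n` such that each `d_{Γ_n}` fragments `K`. -/
theorem statement6 {Γ : Type u} (hΓ : Cardinal.mk Γ < Cardinal.lift.{u} cardinalB)
    (K : Set (Γ → ℝ))
    (hcube : ∀ x ∈ K, ∀ γ, x γ ∈ Set.Icc (0 : ℝ) 1) (hcomp : IsCompact K)
    (hqRN : ∃ f : K → K → ℝ, IsQuasiMetric f ∧ LSC f ∧ Fragments f) :
    ∃ Γn : ℕ → Set Γ, (⋃ n, Γn n) = Set.univ ∧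
      ∀ n, FragmentsOn (dGamma (Γn n)) K :=
  statement6_general hΓ K hcomp hqRN
end

section
/- There exist a set Γ of cardinality 𝔟 and a compact subset K of the cube [0,1]^Γ which is homeomorphic to the Cantor cube {0,1}^ℕ, such that for every countable decomposition Γ = ⋃_{n∈ℕ} Γ_n there exists some n ∈ ℕ for which the pseudometric d_{Γ_n} does not fragment K. -/
open Set Topology Cardinal

/-!
Take `Γ ⊆ ℕ^ℕ` of size `𝔟` that is not σ-bounded, and code a point `z ∈ {0,1}^ℕ` at the
coordinate `σ ∈ Γ` by the pair `(z, k ↦ z ⟨k, σ k⟩)`, mapped into `[0,1]` by a fixed Cantor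
embedding. Any countable cover of `Γ` has a piece `Γ_n` which is unbounded at some coordinate
`k`. Flipping `z` at `⟨k, σ k⟩` for `σ ∈ Γ_n` with `σ k` large stays in any prescribed
neighbourhood of `z`, but changes the second component at `k`; by compactness such a change
moves the Cantor embedding by a fixed `ε > 0`, so no nonempty open piece of `K` has
`d_{Γ_n}`-diameter below `ε`.
-/

open PiNat

lemma exists_pos_le_dist_of_apply_ne {X Y D : Type*} [TopologicalSpace X] [CompactSpace X]
    [MetricSpace Y] [TopologicalSpace D] [DiscreteTopology D] {f : X → Y}
    (hf : Continuous f) (hinj : Function.Injective f) {π : X → D} (hπ : Continuous π) :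
    ∃ ε > 0, ∀ a b, π a ≠ π b → ε ≤ dist (f a) (f b) := by
  set C : Set (X × X) := {p | π p.1 ≠ π p.2}
  rcases C.eq_empty_or_nonempty with hC | hC
  · exact ⟨1, one_pos, fun a b hab => (eq_empty_iff_forall_notMem.1 hC (a, b) hab).elim⟩
  have hCc : IsCompact C :=
    (isClosed_discrete {q : D × D | q.1 ≠ q.2}).preimage
      ((hπ.comp continuous_fst).prodMk (hπ.comp continuous_snd)) |>.isCompact
  obtain ⟨q, hq, hmin⟩ := hCc.exists_isMinOn hC
    ((hf.comp continuous_fst).dist (hf.comp continuous_snd)).continuousOn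
  exact ⟨_, dist_pos.2 (hinj.ne fun h => hq (congrArg π h)),
    fun a b hab => isMinOn_iff.1 hmin (a, b) hab⟩

lemma PiNat.exists_cylinder_subset {E : ℕ → Type*} [∀ n, TopologicalSpace (E n)]
    [∀ n, DiscreteTopology (E n)] {x : ∀ n, E n} {s : Set (∀ n, E n)} (hs : s ∈ 𝓝 x) :
    ∃ n, cylinder x n ⊆ s := by
  obtain ⟨_, ⟨y, n, rfl⟩, hx, hsub⟩ := (isTopologicalBasis_cylinders E).mem_nhds_iff.1 hs
  exact ⟨n, by rwa [mem_cylinder_iff_eq.1 hx]⟩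

lemma abs_sub_le_dGamma {Γ : Type*} {A : Set Γ} {x y : Γ → ℝ}
    (hx : ∀ γ, x γ ∈ Icc (0 : ℝ) 1) (hy : ∀ γ, y γ ∈ Icc (0 : ℝ) 1) {γ : Γ} (hγ : γ ∈ A) :
    |x γ - y γ| ≤ dGamma A x y := by
  refine le_ciSup (f := fun γ : A => |x γ - y γ|) ⟨1, ?_⟩ ⟨γ, hγ⟩
  rintro _ ⟨γ, rfl⟩
  obtain ⟨hx₀, hx₁⟩ := hx γ
  obtain ⟨hy₀, hy₁⟩ := hy γ
  exact abs_sub_le_iff.2 ⟨by linarith, by linarith⟩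

noncomputable def cantorSetHomeomorphProd : (ℕ → Bool) × (ℕ → Bool) ≃ₜ cantorSet :=
  (Homeomorph.sumArrowHomeomorphProdArrow.symm.trans
    (Homeomorph.piCongrLeft (Y := fun _ => Bool) Equiv.natSumNatEquivNat)).trans
    cantorSetHomeomorphNatToBool.symm

section GraphEmbedding

variable {Γ : Type*} (σ : Γ → ℕ → ℕ)

noncomputable def graphEmbedding (z : ℕ → Bool) (γ : Γ) : ℝ :=
  cantorSetHomeomorphProd (z, fun k => z (Nat.pair k (σ γ k)))

lemma continuous_graphEmbedding : Continuous (graphEmbedding σ) :=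
  continuous_pi fun _ => continuous_subtype_val.comp <| cantorSetHomeomorphProd.continuous.comp <|
    continuous_id.prodMk <| continuous_pi fun _ => continuous_apply _

lemma graphEmbedding_mem_Icc (z : ℕ → Bool) (γ : Γ) : graphEmbedding σ z γ ∈ Icc (0 : ℝ) 1 :=
  cantorSet_subset_unitInterval (cantorSetHomeomorphProd _).2

lemma graphEmbedding_injective [Nonempty Γ] : Function.Injective (graphEmbedding σ) :=
  fun _ _ h => congrArg Prod.fst <| cantorSetHomeomorphProd.injective <|
    Subtype.val_injective <| congrFun h (Classical.arbitrary Γ)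

lemma isEmbedding_graphEmbedding [Nonempty Γ] : IsEmbedding (graphEmbedding σ) :=
  ((continuous_graphEmbedding σ).isClosedEmbedding (graphEmbedding_injective σ)).isEmbedding

theorem not_fragmentsOn_dGamma_range_graphEmbedding {A : Set Γ} (hA : ¬ BddAbove (σ '' A)) :
    ¬ FragmentsOn (dGamma A) (range (graphEmbedding σ)) := by
  obtain ⟨k, hk⟩ : ∃ k, ¬ BddAbove ((fun γ => σ γ k) '' A) := by
    simpa [bddAbove_pi, image_image] using hA
  obtain ⟨ε, hε, hsep⟩ := exists_pos_le_dist_of_apply_ne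
    (continuous_subtype_val.comp cantorSetHomeomorphProd.continuous)
    (Subtype.val_injective.comp cantorSetHomeomorphProd.injective)
    (π := fun p => p.2 k) ((continuous_apply k).comp continuous_snd)
  intro hfrag
  obtain ⟨V, hV, ⟨_, hzV, z, rfl⟩, hsmall⟩ :=
    hfrag _ subset_rfl (range_nonempty _) ε hε
  obtain ⟨m, hm⟩ := exists_cylinder_subset
    ((hV.preimage (continuous_graphEmbedding σ)).mem_nhds hzV)
  obtain ⟨_, ⟨γ, hγ, rfl⟩, hmγ⟩ := not_bddAbove_iff.1 hk m
  set n := Nat.pair k (σ γ k)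
  set z' := Function.update z n (!z n)
  have hz' : z' ∈ graphEmbedding σ ⁻¹' V :=
    hm (cylinder_anti z (hmγ.le.trans (Nat.right_le_pair _ _)) (update_mem_cylinder z n _))
  have hne : z n ≠ z' n := by simp [z']
  refine lt_irrefl ε ?_
  calc ε ≤ |graphEmbedding σ z γ - graphEmbedding σ z' γ| := hsep _ _ hne
    _ ≤ dGamma A (graphEmbedding σ z) (graphEmbedding σ z') :=
      abs_sub_le_dGamma (graphEmbedding_mem_Icc σ z) (graphEmbedding_mem_Icc σ z') hγ
    _ < ε := hsmall _ ⟨hzV, z, rfl⟩ _ ⟨hz', z', rfl⟩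

end GraphEmbedding

lemma not_sigmaBounded_univ_s7 : ¬ SigmaBounded Set.univ := by
  rintro ⟨B, hcov, hB⟩
  choose τ hτ using hB
  obtain ⟨n, hn⟩ := mem_iUnion.1 (hcov (mem_univ fun n => τ n n + 1))
  exact (hτ n _ hn n).not_gt (Nat.lt_succ_self _)

lemma exists_not_sigmaBounded_mk_eq_cardinalB :
    ∃ S : Set (ℕ → ℕ), ¬ SigmaBounded S ∧ #S = cardinalB :=
  csInf_mem (s := {c | ∃ S : Set (ℕ → ℕ), ¬ SigmaBounded S ∧ #S = c})
    ⟨_, Set.univ, not_sigmaBounded_univ_s7, rfl⟩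

lemma nonempty_of_not_sigmaBounded {S : Set (ℕ → ℕ)} (hS : ¬ SigmaBounded S) : S.Nonempty :=
  nonempty_iff_ne_empty.2 fun h => hS ⟨fun _ => ∅, by simp [h], fun _ => ⟨0, by simp⟩⟩

lemma exists_not_bddAbove_of_iUnion_eq_univ {S : Set (ℕ → ℕ)} (hS : ¬ SigmaBounded S)
    {Γn : ℕ → Set S} (hcov : ⋃ n, Γn n = Set.univ) : ∃ n, ¬ BddAbove (Subtype.val '' Γn n) := by
  by_contra! h
  refine hS ⟨fun n => Subtype.val '' Γn n, fun σ hσ => ?_, fun n => h n⟩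
  obtain ⟨n, hn⟩ := mem_iUnion.1 (hcov ▸ Set.mem_univ (⟨σ, hσ⟩ : S))
  exact mem_iUnion.2 ⟨n, ⟨σ, hσ⟩, hn, rfl⟩

/-- There exist a set `Γ` of cardinality `𝔟` and a compact `K ⊆ [0,1]^Γ` homeomorphic to the
Cantor cube `{0,1}^ℕ` such that for every countable decomposition `Γ = ⋃_n Γ_n` some
`d_{Γ_n}` does not fragment `K`. -/
theorem statement7 :
    ∃ (Γ : Type) (K : Set (Γ → ℝ)),
      Cardinal.mk Γ = cardinalB ∧
      (∀ x ∈ K, ∀ γ, x γ ∈ Set.Icc (0 : ℝ) 1) ∧ IsCompact K ∧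
      Nonempty (K ≃ₜ (ℕ → Bool)) ∧
      ∀ Γn : ℕ → Set Γ, (⋃ n, Γn n) = Set.univ →
        ∃ n, ¬ FragmentsOn (dGamma (Γn n)) K := by
  obtain ⟨S, hS, hcard⟩ := exists_not_sigmaBounded_mk_eq_cardinalB
  have : Nonempty S := (nonempty_of_not_sigmaBounded hS).to_subtype
  let φ := graphEmbedding (Subtype.val : S → ℕ → ℕ)
  refine ⟨S, range φ, hcard, ?_, isCompact_range (continuous_graphEmbedding _),
    ⟨(isEmbedding_graphEmbedding _).toHomeomorph.symm⟩, fun Γn hcov => ?_⟩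
  · rintro _ ⟨z, rfl⟩ γ
    exact graphEmbedding_mem_Icc _ z γ
  · obtain ⟨n, hn⟩ := exists_not_bddAbove_of_iUnion_eq_univ hS hcov
    exact ⟨n, not_fragmentsOn_dGamma_range_graphEmbedding _ hn⟩
end

section
/- Let W be an Asplund generated real Banach space, i.e., W is the closed linear span of a bounded set N ⊆ W such that the pseudometric d_N fragments the dual unit ball (B_{W*}, weak*). If V is a closed subspace of W whose density character is less than 𝔟, then V is Asplund generated: there exists a bounded set M ⊆ V whose closed linear span is V and such that d_M fragments (B_{V*}, weak*). -/
open Set Topology Cardinal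

/-- The density character of a topological space: the least cardinality of a dense subset. -/
noncomputable def densChar (V : Type u) [TopologicalSpace V] : Cardinal.{u} :=
  sInf { c | ∃ s : Set V, Dense s ∧ #s = c }

/-- The closed unit ball of the dual of `V`, carrying the weak* topology. -/
def dualBall (V : Type u) [NormedAddCommGroup V] [NormedSpace ℝ V] : Set (WeakDual ℝ V) :=
  {φ : WeakDual ℝ V | ∀ x : V, |φ x| ≤ ‖x‖}

/-- The pseudometric `d_M` on the dual unit ball induced by a set `M ⊆ V`:
`d_M(x*, y*) = sup_{x ∈ M} |x*(x) - y*(x)|`. -/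
noncomputable def dM {V : Type u} [NormedAddCommGroup V] [NormedSpace ℝ V] (M : Set V)
    (φ ψ : dualBall V) : ℝ :=
  ⨆ x : M, |(φ : WeakDual ℝ V) x - (ψ : WeakDual ℝ V) x|

/-- `V` is Asplund generated: it is the closed linear span of a bounded set `M` such that
`d_M` fragments the weak* dual unit ball. -/
def AsplundGenerated (V : Type u) [NormedAddCommGroup V] [NormedSpace ℝ V] : Prop :=
  ∃ M : Set V, Bornology.IsBounded M ∧
    (Submodule.span ℝ M).topologicalClosure = ⊤ ∧
    Fragments (dM M)

/-! Fix a dense set `D ⊆ V` with `#D < 𝔟`. Each `d ∈ D` lies within `2⁻ⁿ` of a combination of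
`N` with coefficients of ℓ¹-norm at most `σ_d(n)`, so on the dual ball
`|x*(d) - y*(d)| ≤ 2·2⁻ⁿ + σ_d(n) d_N(x*, y*)`. Fewer than `𝔟` functions `σ_d` are σ-bounded,
say `σ_d ≤ τ_{k(d)}`, and the rescaled set `M = {2^{-k(d)} d / (1 + ‖d‖)}` turns these estimates
into a uniform one: `d_N`-closeness on `B_{W*}` forces `d_M`-closeness of the restrictions to `V`.
Restriction `B_{W*} → B_{V*}` is a continuous surjection of compacta (Banach–Alaoglu,
Hahn–Banach), and fragmentability passes along such a map: given `L`, fragment a minimal closed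
set mapped onto `closure L`. -/

section Fragmentation

variable {X Y : Type*} [TopologicalSpace X] [TopologicalSpace Y] [CompactSpace X] {g : X → Y}

theorem image_sInter_eq_of_isChain [T1Space Y] (hg : Continuous g) {c : Set (Set X)}
    {F : Set Y} (hchain : IsChain (· ⊆ ·) c) (hne : c.Nonempty)
    (hclosed : ∀ s ∈ c, IsClosed s) (himage : ∀ s ∈ c, g '' s = F) : g '' ⋂₀ c = F := by
  obtain ⟨s₀, hs₀⟩ := hne
  refine (image_mono (sInter_subset_of_mem hs₀)).trans (himage s₀ hs₀).le |>.antisymm ?_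
  intro y hy
  have : Nonempty c := ⟨⟨s₀, hs₀⟩⟩
  obtain ⟨x, hx⟩ : (⋂ s : c, (s : Set X) ∩ g ⁻¹' {y}).Nonempty := by
    have hfiber : ∀ s : c, IsClosed ((s : Set X) ∩ g ⁻¹' {y}) := fun s ↦
      (hclosed s s.2).inter (isClosed_singleton.preimage hg)
    refine IsCompact.nonempty_iInter_of_directed_nonempty_isCompact_isClosed _ ?_ (fun s ↦ ?_)
      (fun s ↦ (hfiber s).isCompact) hfiber
    · have hchain' : IsChain (· ⊇ ·) c := hchain.symm
      exact (directedOn_iff_directed.mp hchain'.directedOn).mono_comp (g := (· ∩ g ⁻¹' {y})) _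
        fun _ _ ↦ inter_subset_inter_left _
    · rw [← image_inter_nonempty_iff, himage s s.2]
      exact ⟨y, hy, rfl⟩
  simp only [mem_iInter, mem_inter_iff, mem_preimage, mem_singleton_iff] at hx
  exact ⟨x, fun s hs ↦ (hx ⟨s, hs⟩).1, (hx ⟨s₀, hs₀⟩).2⟩

theorem exists_minimal_isClosed_image_eq [T1Space Y] (hg : Continuous g) {F : Set Y}
    (hF : IsClosed F) (hFg : F ⊆ range g) :
    ∃ C, Minimal (fun C ↦ IsClosed C ∧ g '' C = F) C := by
  obtain ⟨C, -, hC⟩ := zorn_superset_nonempty {C | IsClosed C ∧ g '' C = F}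
    (fun c hc hchain hne ↦ ⟨⋂₀ c, ⟨isClosed_sInter fun s hs ↦ (hc hs).1,
      image_sInter_eq_of_isChain hg hchain hne (fun s hs ↦ (hc hs).1) fun s hs ↦ (hc hs).2⟩,
      fun _ ↦ sInter_subset_of_mem⟩)
    (g ⁻¹' F) ⟨hF.preimage hg, image_preimage_eq_of_subset hFg⟩
  exact ⟨C, hC⟩

theorem Fragments.of_continuous_surjective [T2Space Y] (hg : Continuous g)
    (hgs : Function.Surjective g) {dX : X → X → ℝ} {dY : Y → Y → ℝ} (hX : Fragments dX)
    (hunif : ∀ ε > 0, ∃ δ > 0, ∀ x x', dX x x' < δ → dY (g x) (g x') < ε) :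
    Fragments dY := by
  intro L hL ε hε
  obtain ⟨δ, hδ, hδε⟩ := hunif ε hε
  obtain ⟨C, ⟨hCclosed, hCimage⟩, hCmin⟩ := exists_minimal_isClosed_image_eq hg isClosed_closure
    (fun y _ ↦ hgs y)
  obtain ⟨U, hUopen, hUC, hUsmall⟩ :=
    hX C (image_nonempty.mp (hCimage ▸ hL.closure)) δ hδ
  set G := g '' (C \ U)
  have hGclosed : IsClosed G := ((hCclosed.sdiff hUopen).isCompact.image hg).isClosed
  have hG : ¬ closure L ⊆ G := by
    intro hLG
    obtain ⟨x, hxU, hxC⟩ := hUC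
    have hCU := hCmin ⟨hCclosed.sdiff hUopen,
      (image_mono sdiff_subset).trans hCimage.le |>.antisymm hLG⟩ sdiff_subset hxC
    exact hCU.2 hxU
  have hlift : ∀ y ∈ Gᶜ ∩ L, ∃ x ∈ U ∩ C, g x = y := by
    rintro y ⟨hyG, hyL⟩
    obtain ⟨x, hxC, rfl⟩ := hCimage.ge (subset_closure hyL)
    exact ⟨x, ⟨by_contra fun hxU ↦ hyG ⟨x, ⟨hxC, hxU⟩, rfl⟩, hxC⟩, rfl⟩
  refine ⟨Gᶜ, hGclosed.isOpen_compl, ?_, ?_⟩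
  · obtain ⟨y, hyL, hyG⟩ := not_subset.mp hG
    exact mem_closure_iff.mp hyL _ hGclosed.isOpen_compl hyG
  · rintro _ hy _ hy'
    obtain ⟨x, hx, rfl⟩ := hlift _ hy
    obtain ⟨x', hx', rfl⟩ := hlift _ hy'
    exact hδε _ _ (hUsmall x hx x' hx')

end Fragmentation

section DualBall

variable {W : Type*} [NormedAddCommGroup W] [NormedSpace ℝ W]

theorem mem_dualBall_iff {φ : WeakDual ℝ W} : φ ∈ dualBall W ↔ ‖WeakDual.toStrongDual φ‖ ≤ 1 := by
  simp [dualBall, ContinuousLinearMap.opNorm_le_iff zero_le_one]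

theorem isCompact_dualBall : IsCompact (dualBall W) := by
  convert WeakDual.isCompact_closedBall (0 : StrongDual ℝ W) 1
  ext φ
  simp [mem_dualBall_iff]

theorem dM_nonneg (M : Set W) (φ ψ : dualBall W) : 0 ≤ dM M φ ψ :=
  Real.iSup_nonneg fun _ ↦ abs_nonneg _

theorem abs_sub_le_two_mul_norm (φ ψ : dualBall W) (x : W) :
    |(φ : WeakDual ℝ W) x - (ψ : WeakDual ℝ W) x| ≤ 2 * ‖x‖ := by
  linarith [abs_sub _ _ |>.trans (add_le_add (φ.2 x) (ψ.2 x))]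

theorem abs_sub_le_dM {M : Set W} (hM : Bornology.IsBounded M) (φ ψ : dualBall W) {x : W}
    (hx : x ∈ M) : |(φ : WeakDual ℝ W) x - (ψ : WeakDual ℝ W) x| ≤ dM M φ ψ := by
  obtain ⟨R, hR⟩ := isBounded_iff_forall_norm_le.mp hM
  refine le_ciSup (f := fun x : M ↦ |(φ : WeakDual ℝ W) x - (ψ : WeakDual ℝ W) x|) ⟨2 * R, ?_⟩
    ⟨x, hx⟩
  rintro _ ⟨y, rfl⟩
  exact (abs_sub_le_two_mul_norm φ ψ y).trans (by linarith [hR y y.2])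

theorem exists_abs_sub_le_mul_dM_of_mem_span {N : Set W} (hN : Bornology.IsBounded N) {w : W}
    (hw : w ∈ Submodule.span ℝ N) : ∃ C : ℝ, ∀ φ ψ : dualBall W,
      |(φ : WeakDual ℝ W) w - (ψ : WeakDual ℝ W) w| ≤ C * dM N φ ψ := by
  induction hw using Submodule.span_induction with
  | mem x hx => exact ⟨1, fun φ ψ ↦ by simpa using abs_sub_le_dM hN φ ψ hx⟩
  | zero => exact ⟨0, fun φ ψ ↦ by simp⟩
  | add x y _ _ hx hy =>
    obtain ⟨C₁, hC₁⟩ := hx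
    obtain ⟨C₂, hC₂⟩ := hy
    refine ⟨C₁ + C₂, fun φ ψ ↦ ?_⟩
    rw [map_add, map_add, add_sub_add_comm, add_mul]
    exact (abs_add_le _ _).trans (add_le_add (hC₁ φ ψ) (hC₂ φ ψ))
  | smul a x _ hx =>
    obtain ⟨C, hC⟩ := hx
    refine ⟨|a| * C, fun φ ψ ↦ ?_⟩
    simp only [map_smul, smul_eq_mul, ← mul_sub, abs_mul, mul_assoc]
    exact mul_le_mul_of_nonneg_left (hC φ ψ) (abs_nonneg a)

theorem exists_abs_sub_le_add_mul_dM {N : Set W} (hN : Bornology.IsBounded N)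
    (hspan : (Submodule.span ℝ N).topologicalClosure = ⊤) (x : W) {η : ℝ} (hη : 0 < η) :
    ∃ C : ℕ, ∀ φ ψ : dualBall W,
      |(φ : WeakDual ℝ W) x - (ψ : WeakDual ℝ W) x| ≤ η + C * dM N φ ψ := by
  obtain ⟨w, hw, hxw⟩ : ∃ w ∈ Submodule.span ℝ N, dist x w < η / 2 := by
    refine Metric.mem_closure_iff.mp ?_ _ (half_pos hη)
    rw [← Submodule.topologicalClosure_coe, hspan]
    trivial
  obtain ⟨C, hC⟩ := exists_abs_sub_le_mul_dM_of_mem_span hN hw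
  refine ⟨⌈C⌉₊, fun φ ψ ↦ ?_⟩
  have happrox := abs_sub_le_two_mul_norm φ ψ (x - w)
  rw [map_sub, map_sub, sub_sub_sub_comm] at happrox
  rw [dist_eq_norm] at hxw
  linarith [abs_sub_abs_le_abs_sub ((φ : WeakDual ℝ W) x - (ψ : WeakDual ℝ W) x)
    ((φ : WeakDual ℝ W) w - (ψ : WeakDual ℝ W) w), hC φ ψ,
    mul_le_mul_of_nonneg_right (Nat.le_ceil C) (dM_nonneg N φ ψ)]

end DualBall

section Restriction

variable {W : Type*} [NormedAddCommGroup W] [NormedSpace ℝ W] (V : Subspace ℝ W)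

noncomputable def dualBallRestrict (φ : dualBall W) : dualBall V :=
  ⟨(WeakDual.toStrongDual (φ : WeakDual ℝ W)).comp V.subtypeL, fun v ↦ φ.2 v⟩

theorem continuous_dualBallRestrict : Continuous (dualBallRestrict V) := by
  refine Continuous.subtype_mk (WeakDual.continuous_of_continuous_eval fun v ↦ ?_) _
  exact (WeakDual.eval_continuous (v : W)).comp continuous_subtype_val

theorem dualBallRestrict_surjective : Function.Surjective (dualBallRestrict V) := by
  rintro ⟨ψ, hψ⟩
  obtain ⟨φ, hφψ, hφ⟩ := exists_extension_norm_eq V (WeakDual.toStrongDual ψ)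
  refine ⟨⟨WeakDual.toStrongDual.symm φ, mem_dualBall_iff.mpr ?_⟩,
    Subtype.ext <| DFunLike.ext _ _ hφψ⟩
  simpa [hφ] using mem_dualBall_iff.mp hψ

theorem asplundGenerated_of_dualBallRestrict {N : Set W} (hN : Fragments (dM N)) {M : Set V}
    (hMb : Bornology.IsBounded M) (hMspan : (Submodule.span ℝ M).topologicalClosure = ⊤)
    (hunif : ∀ ε > 0, ∃ δ > 0, ∀ φ ψ : dualBall W, dM N φ ψ < δ →
      ∀ m ∈ M, |(φ : WeakDual ℝ W) m - (ψ : WeakDual ℝ W) m| ≤ ε) :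
    AsplundGenerated V := by
  have : CompactSpace (dualBall W) := isCompact_iff_compactSpace.mp isCompact_dualBall
  refine ⟨M, hMb, hMspan, hN.of_continuous_surjective (continuous_dualBallRestrict V)
    (dualBallRestrict_surjective V) fun ε hε ↦ ?_⟩
  obtain ⟨δ, hδ, hδε⟩ := hunif (ε / 2) (half_pos hε)
  refine ⟨δ, hδ, fun φ ψ hφψ ↦ ?_⟩
  have : dM M (dualBallRestrict V φ) (dualBallRestrict V ψ) ≤ ε / 2 :=
    Real.iSup_le (fun m ↦ hδε φ ψ hφψ m m.2) (half_pos hε).le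
  linarith

end Restriction

theorem exists_dense_mk_eq_densChar (X : Type*) [TopologicalSpace X] :
    ∃ s : Set X, Dense s ∧ #s = densChar X :=
  csInf_mem (s := {c | ∃ s : Set X, Dense s ∧ #s = c}) ⟨_, univ, dense_univ, rfl⟩

theorem exists_le_of_mk_lt_cardinalB {ι : Type*} (σ : ι → ℕ → ℕ)
    (hι : #ι < Cardinal.lift cardinalB) : ∃ (k : ι → ℕ) (τ : ℕ → ℕ → ℕ), ∀ i, σ i ≤ τ (k i) := by
  have hσ : SigmaBounded (range σ) := by
    by_contra hσ
    have hb : cardinalB ≤ #(range σ) := csInf_le' ⟨_, hσ, rfl⟩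
    have hrange : Cardinal.lift #(range σ) ≤ #ι := by simpa using mk_range_le_lift (f := σ)
    exact hι.not_ge ((lift_le.mpr hb).trans hrange)
  obtain ⟨B, hcover, hbounded⟩ := hσ
  choose τ hτ using hbounded
  choose k hk using fun i ↦ mem_iUnion.mp (hcover (mem_range_self i))
  exact ⟨k, τ, fun i ↦ hτ _ _ (hk i)⟩

theorem Dense.topologicalClosure_span_range_smul_eq_top {𝕜 E : Type*} [DivisionRing 𝕜]
    [AddCommGroup E] [Module 𝕜 E] [TopologicalSpace E] [ContinuousAdd E]
    [ContinuousConstSMul 𝕜 E] {s : Set E} (hs : Dense s) {a : s → 𝕜} (ha : ∀ x, a x ≠ 0) :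
    (Submodule.span 𝕜 (range fun x : s ↦ a x • (x : E))).topologicalClosure = ⊤ := by
  rw [← Submodule.dense_iff_topologicalClosure_eq_top]
  refine hs.mono fun x hx ↦ ?_
  have := Submodule.smul_mem _ (a ⟨x, hx⟩)⁻¹
    (Submodule.subset_span (R := 𝕜) (mem_range_self (f := fun x : s ↦ a x • (x : E)) ⟨x, hx⟩))
  simpa [smul_smul, inv_mul_cancel₀ (ha _)] using this

theorem norm_div_one_add_norm_smul_le {E : Type*} [SeminormedAddCommGroup E] [NormedSpace ℝ E]
    {r : ℝ} (hr : 0 ≤ r) (x : E) : ‖(r / (1 + ‖x‖)) • x‖ ≤ r := by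
  have hx : 0 < 1 + ‖x‖ := by positivity
  rw [norm_smul, Real.norm_of_nonneg (by positivity), div_mul_eq_mul_div, div_le_iff₀ hx]
  nlinarith [norm_nonneg x]

/-- The finitely many bounds `τ j K`, `j ≤ K`, serve the indices with `k i ≤ K`; for the others
the weight `2^(-k i)` is already below `2^(-K)`. -/
theorem exists_forall_abs_sub_smul_le {W : Type*} [NormedAddCommGroup W] [NormedSpace ℝ W]
    {N : Set W} {ι : Type*} (x : ι → W) (k : ι → ℕ) (C : ι → ℕ → ℕ) (τ : ℕ → ℕ → ℕ)
    (hC : ∀ i n (φ ψ : dualBall W),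
      |(φ : WeakDual ℝ W) (x i) - (ψ : WeakDual ℝ W) (x i)| ≤ (2⁻¹ : ℝ) ^ n + C i n * dM N φ ψ)
    (hCτ : ∀ i, C i ≤ τ (k i)) {ε : ℝ} (hε : 0 < ε) :
    ∃ δ > 0, ∀ φ ψ : dualBall W, dM N φ ψ < δ → ∀ i,
      |(φ : WeakDual ℝ W) (((2⁻¹ : ℝ) ^ k i / (1 + ‖x i‖)) • x i) -
        (ψ : WeakDual ℝ W) (((2⁻¹ : ℝ) ^ k i / (1 + ‖x i‖)) • x i)| ≤ ε := by
  obtain ⟨K, hK⟩ := exists_pow_lt_of_lt_one (half_pos hε) (by norm_num : (2⁻¹ : ℝ) < 1)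
  set T := (Finset.range (K + 1)).sup fun j ↦ τ j K
  refine ⟨ε / 2 / (T + 1), by positivity, fun φ ψ hφψ i ↦ ?_⟩
  set a := (2⁻¹ : ℝ) ^ k i / (1 + ‖x i‖)
  rcases le_or_gt (k i) K with hki | hki
  · have ha : 0 ≤ a ∧ a ≤ 1 := ⟨by positivity, (div_le_self (by positivity)
      (by linarith [norm_nonneg (x i)])).trans (pow_le_one₀ (by norm_num) (by norm_num))⟩
    have hCT : (C i K : ℝ) ≤ T := by
      exact_mod_cast (hCτ i K).trans (Finset.le_sup (f := fun j ↦ τ j K)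
        (Finset.mem_range.mpr (Nat.lt_succ_of_le hki)))
    have hCdM : C i K * dM N φ ψ ≤ ε / 2 := calc
      _ ≤ (T + 1) * (ε / 2 / (T + 1)) :=
        mul_le_mul (by linarith) hφψ.le (dM_nonneg N φ ψ) (by positivity)
      _ = ε / 2 := by field_simp
    rw [map_smul, map_smul, smul_eq_mul, smul_eq_mul, ← mul_sub, abs_mul, abs_of_nonneg ha.1]
    nlinarith [hC i K φ ψ, abs_nonneg ((φ : WeakDual ℝ W) (x i) - (ψ : WeakDual ℝ W) (x i))]
  · calc _ ≤ 2 * ‖a • x i‖ := abs_sub_le_two_mul_norm φ ψ _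
      _ ≤ 2 * (2⁻¹ : ℝ) ^ K := by
        gcongr
        exact (norm_div_one_add_norm_smul_le (by positivity) _).trans
          (pow_le_pow_of_le_one (by norm_num) (by norm_num) hki.le)
      _ ≤ ε := by linarith

theorem statement9_general {W : Type u} [NormedAddCommGroup W] [NormedSpace ℝ W]
    (hW : AsplundGenerated W)
    (V : Subspace ℝ W)
    (hdens : densChar V < Cardinal.lift.{u} cardinalB) :
    AsplundGenerated V := by
  obtain ⟨N, hNb, hNspan, hNfrag⟩ := hW
  obtain ⟨D, hD, hDcard⟩ := exists_dense_mk_eq_densChar V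
  choose C hC using fun (d : D) (n : ℕ) ↦ exists_abs_sub_le_add_mul_dM hNb hNspan ((d : V) : W)
    (pow_pos (by norm_num : (0 : ℝ) < 2⁻¹) n)
  obtain ⟨k, τ, hτ⟩ := exists_le_of_mk_lt_cardinalB C (hDcard ▸ hdens)
  refine asplundGenerated_of_dualBallRestrict V hNfrag (M := range fun d : D ↦
    ((2⁻¹ : ℝ) ^ k d / (1 + ‖(d : V)‖)) • (d : V)) ?_
    (hD.topologicalClosure_span_range_smul_eq_top fun d ↦ by positivity) fun ε hε ↦ ?_
  · refine isBounded_iff_forall_norm_le.mpr ⟨1, ?_⟩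
    rintro _ ⟨d, rfl⟩
    exact (norm_div_one_add_norm_smul_le (by positivity) _).trans
      (pow_le_one₀ (by norm_num) (by norm_num))
  · obtain ⟨δ, hδ, hδε⟩ := exists_forall_abs_sub_smul_le _ k C τ hC hτ hε
    refine ⟨δ, hδ, fun φ ψ hφψ ↦ ?_⟩
    rintro _ ⟨d, rfl⟩
    exact hδε φ ψ hφψ d

/-- If `W` is an Asplund generated Banach space and `V` is a closed subspace of `W` of
density character less than `𝔟`, then `V` is Asplund generated. -/
theorem statement9 {W : Type u} [NormedAddCommGroup W] [NormedSpace ℝ W] [CompleteSpace W]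
    (hW : AsplundGenerated W)
    (V : Subspace ℝ W) (hVclosed : IsClosed (V : Set W))
    (hdens : densChar V < Cardinal.lift.{u} cardinalB) :
    AsplundGenerated V :=
  statement9_general hW V hdens
end

section
/- Let S ⊆ ℕ^ℕ be a set which is not σ-bounded in the pointwise order, and let Γ_n (n ∈ ℕ) be subsets of S such that ⋃_{n∈ℕ} Γ_n = S. Then there exist n, m ∈ ℕ and an infinite set A ∈ 𝒜_m with A ⊆ Γ_n. -/
open Set Topology Cardinal

/-- The family `𝒜_m`: sets `A ⊆ ℕ^ℕ` such that any two distinct members agree on all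
coordinates `i ≤ m` and differ at coordinate `m + 1`. -/
def AFam (m : ℕ) : Set (Set (ℕ → ℕ)) :=
  {A | ∀ σ ∈ A, ∀ τ ∈ A, σ ≠ τ → (∀ i ≤ m, σ i = τ i) ∧ σ (m + 1) ≠ τ (m + 1)}

/-- Truncation: keep coordinates `≤ i`, zero out the rest. -/
def trunc14 (i : ℕ) (σ : ℕ → ℕ) : ℕ → ℕ := fun j => if j ≤ i then σ j else 0

lemma fiber_fin14 (Γ : Set (ℕ → ℕ))
    (hΓ : ∀ (m : ℕ) (A : Set (ℕ → ℕ)), A.Infinite → A ∈ AFam m → ¬ A ⊆ Γ)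
    (i : ℕ) (p : ℕ → ℕ) :
    ((fun σ => σ (i + 1)) '' {σ ∈ Γ | trunc14 i σ = p}).Finite := by
  by_contra hinf
  set V := (fun σ => σ (i + 1)) '' {σ ∈ Γ | trunc14 i σ = p} with hV
  have hsel : ∀ v : V, ∃ σ, σ ∈ Γ ∧ trunc14 i σ = p ∧ σ (i + 1) = (v : ℕ) := by
    rintro ⟨v, σ, ⟨h1, h2⟩, h3⟩
    exact ⟨σ, h1, h2, h3⟩
  choose g hg1 hg2 hg3 using hsel
  have hginj : Function.Injective g := by
    intro v w hvw
    have : (v : ℕ) = (w : ℕ) := by rw [← hg3 v, ← hg3 w, hvw]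
    exact Subtype.ext this
  have : Infinite V := Set.infinite_coe_iff.mpr hinf
  refine hΓ i (Set.range g) (Set.infinite_range_of_injective hginj) ?_ ?_
  · rintro σ ⟨v, rfl⟩ τ ⟨w, rfl⟩ hne
    constructor
    · intro j hj
      have h1 : trunc14 i (g v) j = trunc14 i (g w) j := by rw [hg2 v, hg2 w]
      simpa [trunc14, hj] using h1
    · intro heq
      apply hne
      have : (v : ℕ) = (w : ℕ) := by rw [← hg3 v, ← hg3 w, heq]
      exact congrArg g (Subtype.ext this)
  · rintro σ ⟨v, rfl⟩
    exact hg1 v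

lemma tr_fin14 (Γ : Set (ℕ → ℕ))
    (hΓ : ∀ (m : ℕ) (A : Set (ℕ → ℕ)), A.Infinite → A ∈ AFam m → ¬ A ⊆ Γ)
    (k : ℕ) : ∀ i, ((trunc14 i) '' {σ ∈ Γ | σ 0 = k}).Finite := by
  intro i
  induction i with
  | zero =>
    apply Set.Finite.subset (Set.finite_singleton (trunc14 0 (fun _ => k)))
    rintro q ⟨σ, ⟨_, hσ0⟩, rfl⟩
    simp only [Set.mem_singleton_iff]
    funext j
    by_cases hj : j ≤ 0
    · interval_cases j
      simp [trunc14, hσ0]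
    · simp [trunc14, hj]
  | succ i ih =>
    have hsub : (trunc14 (i + 1)) '' {σ ∈ Γ | σ 0 = k} ⊆
        ⋃ p ∈ (trunc14 i) '' {σ ∈ Γ | σ 0 = k},
          (fun v => (fun j => if j ≤ i then p j else if j = i + 1 then v else 0)) ''
            ((fun σ => σ (i + 1)) '' {σ ∈ Γ | trunc14 i σ = p}) := by
      rintro q ⟨σ, hσ, rfl⟩
      refine Set.mem_biUnion ⟨σ, hσ, rfl⟩ ⟨σ (i + 1), ⟨σ, ⟨hσ.1, rfl⟩, rfl⟩, ?_⟩
      funext j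
      simp only [trunc14]
      rcases Nat.lt_or_ge j (i + 1) with hj | hj
      · have hj' : j ≤ i := Nat.lt_succ_iff.mp hj
        simp [hj', Nat.le_succ_of_le hj']
      · have hj' : ¬ j ≤ i := by omega
        rcases Nat.eq_or_lt_of_le hj with rfl | hj2
        · simp
        · have h2 : ¬ j ≤ i + 1 := by omega
          have h3 : j ≠ i + 1 := by omega
          simp [hj', h2, h3]
    exact Set.Finite.subset (Set.Finite.biUnion ih
      (fun p _ => (fiber_fin14 Γ hΓ i p).image _)) hsub

lemma bounded14 (Γ : Set (ℕ → ℕ))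
    (hΓ : ∀ (m : ℕ) (A : Set (ℕ → ℕ)), A.Infinite → A ∈ AFam m → ¬ A ⊆ Γ)
    (k : ℕ) : ∃ τ : ℕ → ℕ, ∀ σ ∈ {σ ∈ Γ | σ 0 = k}, σ ≤ τ := by
  have hfin : ∀ i : ℕ, ((fun σ => σ i) '' {σ ∈ Γ | σ 0 = k}).Finite := by
    intro i
    have : (fun σ => σ i) '' {σ ∈ Γ | σ 0 = k} ⊆
        (fun q : ℕ → ℕ => q i) '' ((trunc14 i) '' {σ ∈ Γ | σ 0 = k}) := by
      rintro v ⟨σ, hσ, rfl⟩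
      exact ⟨trunc14 i σ, ⟨σ, hσ, rfl⟩, by simp [trunc14]⟩
    exact Set.Finite.subset ((tr_fin14 Γ hΓ k i).image _) this
  refine ⟨fun i => sSup ((fun σ => σ i) '' {σ ∈ Γ | σ 0 = k}), ?_⟩
  intro σ hσ i
  exact le_csSup (hfin i).bddAbove ⟨σ, hσ, rfl⟩

/-- If `S ⊆ ℕ^ℕ` is not σ-bounded and `S = ⋃_n Γ_n`, then some `Γ_n` contains an infinite
member of some `𝒜_m`. -/
theorem statement14 (S : Set (ℕ → ℕ)) (hS : ¬ SigmaBounded S)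
    (Γn : ℕ → Set (ℕ → ℕ)) (hsub : ∀ n, Γn n ⊆ S) (hcover : (⋃ n, Γn n) = S) :
    ∃ (n m : ℕ) (A : Set (ℕ → ℕ)), A.Infinite ∧ A ∈ AFam m ∧ A ⊆ Γn n := by
  by_contra h
  push_neg at h
  apply hS
  refine ⟨fun j => {σ ∈ Γn j.unpair.1 | σ 0 = j.unpair.2}, ?_, ?_⟩
  · intro σ hσ
    rw [← hcover] at hσ
    obtain ⟨n, hn⟩ := Set.mem_iUnion.mp hσ
    exact Set.mem_iUnion.mpr ⟨Nat.pair n (σ 0), by simp [Nat.unpair_pair, hn]⟩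
  · intro j
    exact bounded14 (Γn j.unpair.1)
      (fun m A hA hAm hsub' => h j.unpair.1 m A hA hAm hsub') j.unpair.2
end

section
/- Every quasi Radon-Nikodým compact space K is countably lower fragmentable: if some lower semicontinuous quasi metric fragments the compact Hausdorff space K, then there exist bounded sets A_{n,p} ⊆ C(K) (n,p ∈ ℕ) with C(K) = ⋃_{n∈ℕ} A_{n,p} for every p ∈ ℕ, such that the pseudometric d_{A_{n,p}}(x,y) = sup_{f∈A_{n,p}} |f(x) − f(y)| (1/p)-fragments K for all n,p. -/
open Set Topology Cardinal

/-- `d` Δ-fragments `X`: every nonempty subset has a nonempty relatively open subset of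
`d`-diameter at most `Δ`. -/
def DeltaFragments {X : Type*} [TopologicalSpace X] (d : X → X → ℝ) (Δ : ℝ) : Prop :=
  ∀ L : Set X, L.Nonempty →
    ∃ V : Set X, IsOpen V ∧ (V ∩ L).Nonempty ∧
      ∀ x ∈ V ∩ L, ∀ y ∈ V ∩ L, d x y ≤ Δ

/-- The pseudometric on `K` induced by a bounded set `A` of continuous functions:
`d_A(x,y) = sup_{f ∈ A} |f(x) - f(y)|`. -/
noncomputable def dC {K : Type*} [TopologicalSpace K] (A : Set (ContinuousMap K ℝ))
    (x y : K) : ℝ :=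
  ⨆ f : A, |(f : ContinuousMap K ℝ) x - (f : ContinuousMap K ℝ) y|

/-!
For continuous `g` and `ε > 0`, the sets `{(x, y) | |g x - g y| < n f(x, y) + ε}` are open by lower
semicontinuity of `f`, increase with `n`, and cover `K × K` because `f` vanishes only on the
diagonal; by compactness one of them is all of `K × K`. So `C(K)` is the union over `n` of the
bounded sets `A_{n,p}` of functions with `‖g‖ ≤ n` and `|g x - g y| ≤ n f(x, y) + 1/(2p)`, and on a
relatively open piece of a nonempty `L ⊆ K` where `f < 1/(2p(n+1))`, every `g ∈ A_{n,p}`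
oscillates by at most `1/p`.
-/

theorem LSC.const_mul {X : Type*} [TopologicalSpace X] {f : X → X → ℝ} (hf : LSC f) {c : ℝ}
    (hc : 0 ≤ c) : LSC fun x y => c * f x y :=
  (continuous_const_mul c).comp_lowerSemicontinuous hf (monotone_mul_left_of_nonneg hc)

theorem exists_nat_dist_le_mul_add {X Y : Type*} [TopologicalSpace X] [CompactSpace X]
    [PseudoMetricSpace Y] {f : X → X → ℝ} (hf : LSC f) (hf0 : ∀ x y, 0 ≤ f x y)
    (hf_eq : ∀ x y, f x y = 0 → x = y) {g : X → Y} (hg : Continuous g) {ε : ℝ} (hε : 0 < ε) :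
    ∃ n : ℕ, ∀ x y, dist (g x) (g y) ≤ n * f x y + ε := by
  set U : ℕ → Set (X × X) := fun n => {q | dist (g q.1) (g q.2) < n * f q.1 q.2 + ε}
  have hU_open : ∀ n, IsOpen (U n) := fun n => by
    have hlsc : LowerSemicontinuous fun q : X × X => n * f q.1 q.2 + ε - dist (g q.1) (g q.2) :=
      ((hf.const_mul n.cast_nonneg).add lowerSemicontinuous_const).add
        (by fun_prop : Continuous fun q : X × X => -dist (g q.1) (g q.2)).lowerSemicontinuous
    convert hlsc.isOpen_preimage 0 using 1
    ext q
    simp [U, sub_pos]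
  have hU_mono : Monotone U := fun m n hmn q (hq : dist _ _ < _) =>
    hq.trans_le (by gcongr; exact hf0 _ _)
  have hU_cover : Set.univ ⊆ ⋃ n, U n := by
    rintro ⟨x, y⟩ -
    rcases eq_or_ne x y with rfl | hxy
    · exact mem_iUnion.2 ⟨0, by simpa [U] using hε⟩
    · have hpos : 0 < f x y := (hf0 x y).lt_of_ne fun h => hxy (hf_eq x y h.symm)
      obtain ⟨n, hn⟩ := exists_nat_gt (dist (g x) (g y) / f x y)
      refine mem_iUnion.2 ⟨n, ?_⟩
      have : dist (g x) (g y) < n * f x y := (div_lt_iff₀ hpos).1 hn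
      show dist (g x) (g y) < n * f x y + ε
      linarith
  obtain ⟨n, hn⟩ := isCompact_univ.elim_directed_cover U hU_open hU_cover hU_mono.directed_le
  exact ⟨n, fun x y => (hn (mem_univ (x, y))).le⟩

section QuasiLipschitzBall

variable {X : Type*} [TopologicalSpace X] [CompactSpace X]

def quasiLipschitzBall (f : X → X → ℝ) (n : ℕ) (ε : ℝ) : Set C(X, ℝ) :=
  {g | ‖g‖ ≤ n ∧ ∀ x y, |g x - g y| ≤ n * f x y + ε}

theorem isBounded_quasiLipschitzBall (f : X → X → ℝ) (n : ℕ) (ε : ℝ) :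
    Bornology.IsBounded (quasiLipschitzBall f n ε) :=
  (Metric.isBounded_closedBall (x := 0) (r := n)).subset fun g hg => by
    simpa using hg.1

theorem iUnion_quasiLipschitzBall {f : X → X → ℝ} (hf : LSC f) (hf0 : ∀ x y, 0 ≤ f x y)
    (hf_eq : ∀ x y, f x y = 0 → x = y) {ε : ℝ} (hε : 0 < ε) :
    ⋃ n, quasiLipschitzBall f n ε = Set.univ := by
  refine eq_univ_of_forall fun g => mem_iUnion.2 ?_
  obtain ⟨n, hn⟩ := exists_nat_dist_le_mul_add hf hf0 hf_eq g.continuous hε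
  refine ⟨max n ⌈‖g‖⌉₊, (Nat.le_ceil _).trans (Nat.cast_le.2 (le_max_right _ _)), fun x y => ?_⟩
  calc |g x - g y| = dist (g x) (g y) := (Real.dist_eq _ _).symm
    _ ≤ n * f x y + ε := hn x y
    _ ≤ (max n ⌈‖g‖⌉₊ : ℕ) * f x y + ε := by
      gcongr
      · exact hf0 x y
      · exact le_max_left _ _

theorem deltaFragments_dC_quasiLipschitzBall {f : X → X → ℝ} (hfrag : Fragments f) (n : ℕ)
    {ε δ : ℝ} (hε : 0 ≤ ε) (hεδ : ε < δ) : DeltaFragments (dC (quasiLipschitzBall f n ε)) δ := by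
  intro L hL
  have hη : 0 < (δ - ε) / (n + 1) := div_pos (sub_pos.2 hεδ) n.cast_add_one_pos
  obtain ⟨V, hV_open, hV_ne, hV_small⟩ := hfrag L hL _ hη
  refine ⟨V, hV_open, hV_ne, fun x hx y hy => Real.iSup_le ?_ (hε.trans hεδ.le)⟩
  rintro ⟨g, -, hg_osc⟩
  have hnη : (n : ℝ) * ((δ - ε) / (n + 1)) ≤ δ - ε := by
    rw [← mul_div_assoc, div_le_iff₀ n.cast_add_one_pos]
    nlinarith
  calc |g x - g y| ≤ n * f x y + ε := hg_osc x y
    _ ≤ n * ((δ - ε) / (n + 1)) + ε := by gcongr; exact (hV_small x hx y hy).le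
    _ ≤ δ := by linarith

end QuasiLipschitzBall

theorem statement15_general {K : Type*} [TopologicalSpace K] [CompactSpace K]
    (hqRN : ∃ f : K → K → ℝ, IsQuasiMetric f ∧ LSC f ∧ Fragments f) :
    ∃ A : ℕ → ℕ → Set (ContinuousMap K ℝ),
      (∀ n p, 0 < p → Bornology.IsBounded (A n p)) ∧
      (∀ p, 0 < p → (⋃ n, A n p) = Set.univ) ∧
      (∀ n p, 0 < p → DeltaFragments (dC (A n p)) ((p : ℝ)⁻¹)) := by
  obtain ⟨f, ⟨hf0, -, hf_eq⟩, hf, hfrag⟩ := hqRN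
  refine ⟨fun n p => quasiLipschitzBall f n (2 * p : ℝ)⁻¹,
    fun n p _ => isBounded_quasiLipschitzBall f n _,
    fun p hp => iUnion_quasiLipschitzBall hf hf0 (fun x y => (hf_eq x y).1) (by positivity),
    fun n p hp => deltaFragments_dC_quasiLipschitzBall hfrag n (by positivity) ?_⟩
  have hp' : (0 : ℝ) < p := Nat.cast_pos.2 hp
  rw [inv_lt_inv₀ (by positivity) hp']
  linarith

/-- Every quasi Radon-Nikodým compact space is countably lower fragmentable. -/
theorem statement15 {K : Type*} [TopologicalSpace K] [CompactSpace K] [T2Space K]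
    (hqRN : ∃ f : K → K → ℝ, IsQuasiMetric f ∧ LSC f ∧ Fragments f) :
    ∃ A : ℕ → ℕ → Set (ContinuousMap K ℝ),
      (∀ n p, 0 < p → Bornology.IsBounded (A n p)) ∧
      (∀ p, 0 < p → (⋃ n, A n p) = Set.univ) ∧
      (∀ n p, 0 < p → DeltaFragments (dC (A n p)) ((p : ℝ)⁻¹)) :=
  statement15_general hqRN
end
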